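/- arXiv:2101.08830 — 9 statements merged into one kernel-verified Lean document; each statement's English description precedes it below -/
import Mathlib

section
/- Let (a_k) be a nonnegative sequence of real numbers and Γ > 0. If Γ·a_k² ≤ a_k − a_{k+1} holds for all k = 0, 1, …, ℓ−1 (for some positive integer ℓ), then a_ℓ ≤ a_0/(1 + Γ·a_0·ℓ) < 1/(Γ·ℓ). -/
/-- If `(a k)` is a nonnegative real sequence, `Γ > 0`, and
`Γ * (a k)^2 ≤ a k - a (k+1)` for all `k = 0, …, ℓ-1`, then
`a ℓ ≤ a 0 / (1 + Γ * a 0 * ℓ) < 1 / (Γ * ℓ)`. -/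
theorem frank_wolfe_rate_lemma (a : ℕ → ℝ) (Γ : ℝ) (ℓ : ℕ)
    (ha : ∀ k, 0 ≤ a k) (hΓ : 0 < Γ) (hℓ : 1 ≤ ℓ)
    (h : ∀ k < ℓ, Γ * a k ^ 2 ≤ a k - a (k + 1)) :
    a ℓ ≤ a 0 / (1 + Γ * a 0 * ℓ) ∧ a 0 / (1 + Γ * a 0 * ℓ) < 1 / (Γ * ℓ) := by
  have ha0 := ha 0
  have hℓpos : (0:ℝ) < ℓ := by exact_mod_cast Nat.lt_of_lt_of_le Nat.zero_lt_one hℓ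
  have hden : 0 < 1 + Γ * a 0 * ℓ := by positivity
  refine ⟨?_, ?_⟩
  · -- step decrease
    have step : ∀ k, k < ℓ → a (k + 1) ≤ a k := by
      intro k hk
      have := h k hk
      nlinarith [ha k, sq_nonneg (a k)]
    -- monotonicity: a k' ≤ a k for k ≤ k' ≤ ℓ
    have mono : ∀ n k, k + n ≤ ℓ → a (k + n) ≤ a k := by
      intro n
      induction n with
      | zero => intro k _; simp
      | succ m ih =>
        intro k hkm
        have h1 : a (k + m + 1) ≤ a (k + m) := step _ (by omega)
        have h2 : a (k + m) ≤ a k := ih k (by omega)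
        calc a (k + (m+1)) = a (k + m + 1) := by ring_nf
          _ ≤ a k := h1.trans h2
    rcases eq_or_lt_of_le (ha ℓ) with hz | hpos
    · rw [← hz]; positivity
    · -- all a k positive for k ≤ ℓ
      have apos : ∀ k, k ≤ ℓ → 0 < a k := by
        intro k hk
        have : a ℓ ≤ a k := by
          have := mono (ℓ - k) k (by omega)
          rwa [Nat.add_sub_cancel' hk] at this
        linarith
      have key : ∀ k, k ≤ ℓ → 1 / a 0 + Γ * k ≤ 1 / a k := by
        intro k
        induction k with
        | zero => intro _; simp
        | succ m ih =>
          intro hm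
          have hm' : m ≤ ℓ := by omega
          have ihm := ih hm'
          have hpm : 0 < a m := apos m hm'
          have hpm1 : 0 < a (m + 1) := apos (m + 1) hm
          have hst : a (m + 1) ≤ a m := step m (by omega)
          have hh := h m (by omega)
          have hstep : 1 / a m + Γ ≤ 1 / a (m + 1) := by
            rw [div_add' _ _ _ (ne_of_gt hpm), div_le_div_iff₀ hpm hpm1]
            nlinarith
          push_cast
          calc 1 / a 0 + Γ * (m + 1) = (1 / a 0 + Γ * m) + Γ := by ring
            _ ≤ 1 / a m + Γ := by linarith
            _ ≤ 1 / a (m + 1) := hstep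
      have kl := key ℓ le_rfl
      have ha0p : 0 < a 0 := apos 0 (by omega)
      rw [le_div_iff₀ hden]
      have : (1 / a 0 + Γ * ℓ) * (a 0 * a ℓ) ≤ (1 / a ℓ) * (a 0 * a ℓ) := by
        apply mul_le_mul_of_nonneg_right kl (by positivity)
      have e1 : (1 / a 0 + Γ * ℓ) * (a 0 * a ℓ) = a ℓ * (1 + Γ * a 0 * ℓ) := by
        field_simp
      have e2 : (1 / a ℓ) * (a 0 * a ℓ) = a 0 := by
        field_simp
      linarith [e1 ▸ e2 ▸ this]
  · rw [div_lt_div_iff₀ hden (by positivity)]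
    nlinarith
end

section
/- Let C ⊆ ℝⁿ be a nonempty closed convex set and f : ℝⁿ → ℝ be continuously differentiable satisfying condition (B) on C. Then for each x ∈ C, the linear problem of minimizing p ↦ ⟨∇f(x), p − x⟩ over p ∈ C has a solution, i.e., there exists p* ∈ C with ⟨∇f(x), p* − x⟩ ≤ ⟨∇f(x), p − x⟩ for all p ∈ C. -/
open scoped RealInnerProductSpace
open Filter Topology

/-- If `C ⊆ ℝⁿ` is nonempty, closed and convex, `f` is continuously differentiable and
satisfies condition (B) on `C`, then for each `x ∈ C` the linear problem of minimizing
`p ↦ ⟪∇f x, p - x⟫` over `C` has a solution. -/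
theorem linear_oracle_has_solution (n : ℕ) (C : Set (EuclideanSpace ℝ (Fin n)))
    (hCne : C.Nonempty) (hCcl : IsClosed C) (hCconv : Convex ℝ C)
    (f : EuclideanSpace ℝ (Fin n) → ℝ) (hf : ContDiff ℝ 1 f)
    (hB : ∀ x ∈ C, ∀ d : EuclideanSpace ℝ (Fin n),
      (∀ y ∈ C, ∀ t : ℝ, 0 ≤ t → y + t • d ∈ C) → d ≠ 0 → 0 < ⟪gradient f x, d⟫)
    (x : EuclideanSpace ℝ (Fin n)) (hx : x ∈ C) :
    ∃ pstar ∈ C, ∀ p ∈ C, ⟪gradient f x, pstar - x⟫ ≤ ⟪gradient f x, p - x⟫ := by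
  classical
  set v := gradient f x with hv
  set g : EuclideanSpace ℝ (Fin n) → ℝ := fun p => ⟪v, p - x⟫ with hg
  have hgcont : Continuous g := by
    exact Continuous.inner continuous_const (continuous_id.sub continuous_const)
  set S := C ∩ {p | g p ≤ 0} with hS
  have hxS : x ∈ S := ⟨hx, by simp [hg]⟩
  have hSclosed : IsClosed S :=
    hCcl.inter (isClosed_le hgcont continuous_const)
  have hSbdd : Bornology.IsBounded S := by
    by_contra hub
    rw [isBounded_iff_forall_norm_le] at hub
    push_neg at hub
    have hseq : ∀ k : ℕ, ∃ p ∈ S, ‖x‖ + ((k : ℝ) + 1) < ‖p‖ := fun k => hub _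
    choose p hpS hpn using hseq
    have hpx : ∀ k : ℕ, (k : ℝ) + 1 ≤ ‖p k - x‖ := by
      intro k
      have h1 : ‖p k‖ - ‖x‖ ≤ ‖p k - x‖ := norm_sub_norm_le _ _
      linarith [hpn k]
    have hpx0 : ∀ k : ℕ, 0 < ‖p k - x‖ := fun k =>
      lt_of_lt_of_le (by positivity) (hpx k)
    set d : ℕ → EuclideanSpace ℝ (Fin n) := fun k => (‖p k - x‖)⁻¹ • (p k - x) with hd
    have hdnorm : ∀ k, ‖d k‖ = 1 := by
      intro k
      rw [hd, norm_smul, norm_inv, norm_norm, inv_mul_cancel₀ (hpx0 k).ne']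
    have hdsphere : ∀ k, d k ∈ Metric.sphere (0 : EuclideanSpace ℝ (Fin n)) 1 := by
      intro k; simp [hdnorm k]
    obtain ⟨a, ha, φ, hφ, hda⟩ :=
      tendsto_subseq_of_bounded Metric.isBounded_sphere hdsphere
    rw [Metric.isClosed_sphere.closure_eq] at ha
    have hanorm : ‖a‖ = 1 := by simpa using ha
    have hane : a ≠ 0 := by
      intro h; rw [h, norm_zero] at hanorm; norm_num at hanorm
    -- recession from x
    have hrecx : ∀ t : ℝ, 0 ≤ t → x + t • a ∈ C := by
      intro t ht
      have hmem : ∀ᶠ k in atTop, x + t • d (φ k) ∈ C := by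
        filter_upwards [eventually_ge_atTop ⌈t⌉₊] with k hk
        have hkφ : (k : ℝ) ≤ φ k := by exact_mod_cast hφ.id_le k
        have hkt : t ≤ ‖p (φ k) - x‖ := by
          have h1 : t ≤ (k : ℝ) := le_trans (Nat.le_ceil t) (by exact_mod_cast hk)
          have h2 : (φ k : ℝ) + 1 ≤ ‖p (φ k) - x‖ := hpx (φ k)
          linarith
        set θ := t / ‖p (φ k) - x‖ with hθ
        have hθ0 : 0 ≤ θ := div_nonneg ht (hpx0 _).le
        have hθ1 : θ ≤ 1 := (div_le_one (hpx0 _)).2 hkt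
        have key : x + t • d (φ k) = (1 - θ) • x + θ • p (φ k) := by
          have h3 : t • d (φ k) = θ • (p (φ k) - x) := by
            rw [hd, smul_smul, hθ, div_eq_mul_inv]
          rw [h3]; module
        rw [key]
        exact hCconv hx (hpS (φ k)).1 (by linarith) hθ0 (by ring)
      have hlim : Filter.Tendsto (fun k => x + t • d (φ k)) atTop (𝓝 (x + t • a)) :=
        tendsto_const_nhds.add (hda.const_smul t)
      exact hCcl.mem_of_tendsto hlim hmem
    -- recession from any y
    have hrec : ∀ y ∈ C, ∀ t : ℝ, 0 ≤ t → y + t • a ∈ C := by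
      intro y hy t ht
      have hmem : ∀ᶠ m : ℕ in atTop,
          y + (t / ((m : ℝ) + 1)) • (x - y) + t • a ∈ C := by
        filter_upwards [eventually_ge_atTop ⌈t⌉₊] with m hm
        have hm1 : t ≤ (m : ℝ) + 1 := by
          have := Nat.le_ceil t
          have h2 : ((⌈t⌉₊ : ℝ)) ≤ (m : ℝ) := by exact_mod_cast hm
          linarith
        have hmpos : (0 : ℝ) < (m : ℝ) + 1 := by positivity
        set θ := t / ((m : ℝ) + 1) with hθ
        have hθ0 : 0 ≤ θ := div_nonneg ht hmpos.le
        have hθ1 : θ ≤ 1 := (div_le_one hmpos).2 hm1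
        have h1 : x + ((m : ℝ) + 1) • a ∈ C := hrecx _ hmpos.le
        have key : y + θ • (x - y) + t • a
            = (1 - θ) • y + θ • (x + ((m : ℝ) + 1) • a) := by
          have ht' : θ * ((m : ℝ) + 1) = t := by
            rw [hθ]; field_simp
          rw [smul_add, smul_smul, ht']; module
        rw [key]
        exact hCconv hy h1 (by linarith) hθ0 (by ring)
      have hlim : Filter.Tendsto
          (fun m : ℕ => y + (t / ((m : ℝ) + 1)) • (x - y) + t • a)
          atTop (𝓝 (y + (0 : ℝ) • (x - y) + t • a)) := by
        have h0 : Filter.Tendsto (fun m : ℕ => t / ((m : ℝ) + 1)) atTop (𝓝 0) := by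
          apply Tendsto.div_atTop tendsto_const_nhds
          exact tendsto_atTop_add_const_right _ 1 tendsto_natCast_atTop_atTop
        exact ((tendsto_const_nhds.add (h0.smul tendsto_const_nhds)).add tendsto_const_nhds)
      rw [show y + (0 : ℝ) • (x - y) + t • a = y + t • a by module] at hlim
      exact hCcl.mem_of_tendsto hlim hmem
    have hpos : 0 < ⟪v, a⟫ := hB x hx a hrec hane
    have hnonpos : ⟪v, a⟫ ≤ 0 := by
      have hle : ∀ k, ⟪v, d (φ k)⟫ ≤ 0 := by
        intro k
        rw [hd, real_inner_smul_right]
        exact mul_nonpos_of_nonneg_of_nonpos (by positivity) (hpS (φ k)).2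
      have hlim : Filter.Tendsto (fun k => ⟪v, d (φ k)⟫) atTop (𝓝 ⟪v, a⟫) :=
        Filter.Tendsto.inner tendsto_const_nhds hda
      exact le_of_tendsto hlim (Filter.Eventually.of_forall hle)
    linarith
  have hScompact : IsCompact S :=
    Metric.isCompact_of_isClosed_isBounded hSclosed hSbdd
  obtain ⟨pstar, hpstarS, hmin⟩ :=
    hScompact.exists_isMinOn ⟨x, hxS⟩ hgcont.continuousOn
  refine ⟨pstar, hpstarS.1, ?_⟩
  intro q hq
  by_cases hgq : g q ≤ 0
  · exact hmin ⟨hq, hgq⟩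
  · have h1 : g pstar ≤ g x := hmin hxS
    have h2 : g x = 0 := by simp [hg]
    push_neg at hgq
    have : g pstar ≤ g q := by linarith
    exact this
end

section
/- Let C ⊆ ℝⁿ be a nonempty closed convex set and f : ℝⁿ → ℝ be continuously differentiable satisfying condition (B) on C. If D ⊆ C is a bounded set, then the set ⋃_{x∈D} {q ∈ C : ⟨∇f(x), q − x⟩ ≤ ⟨∇f(x), p − x⟩ for all p ∈ C} (the union over x ∈ D of all minimizers of p ↦ ⟨∇f(x), p − x⟩ over C) is bounded. -/
open scoped RealInnerProductSpace
open Filter Topology Bornology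

/-!
If the minimizers were unbounded, we could pick `xₖ ∈ D` and minimizers `qₖ` with `‖qₖ‖ → ∞`;
along a subsequence `xₖ → x₀ ∈ C` and `qₖ / ‖qₖ‖ → d` with `‖d‖ = 1`. Since `qₖ ∈ C`, the unit
vector `d` lies in the asymptotic cone of `C`, while dividing `⟪∇f xₖ, qₖ⟫ ≤ ⟪∇f xₖ, p⟫` by `‖qₖ‖`
gives `⟪∇f x₀, d⟫ ≤ 0`, contradicting condition (B) at `x₀`.
-/

section Normed

variable {E : Type*} [NormedAddCommGroup E]

theorem exists_seq_mem_tendsto_norm_atTop {s : Set E} (hs : ¬IsBounded s) :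
    ∃ q : ℕ → E, (∀ k, q k ∈ s) ∧ Tendsto (fun k => ‖q k‖) atTop atTop := by
  rw [isBounded_iff_forall_norm_le] at hs
  push Not at hs
  choose q hqs hq using fun k : ℕ => hs k
  exact ⟨q, hqs, tendsto_atTop_mono (fun k => (hq k).le) tendsto_natCast_atTop_atTop⟩

variable [NormedSpace ℝ E] {α : Type*} {l : Filter α} [l.NeBot]

theorem mem_asymptoticCone_of_tendsto_normalize {s : Set E} {q : α → E} {d : E}
    (hs : ∀ᶠ x in l, q x ∈ s) (hq : Tendsto (fun x => ‖q x‖) l atTop)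
    (hd : Tendsto (fun x => ‖q x‖⁻¹ • q x) l (𝓝 d)) : d ∈ asymptoticCone ℝ s := by
  have hrescale : ∀ᶠ x in l, ‖q x‖ • ‖q x‖⁻¹ • q x ∈ s := by
    filter_upwards [hs, hq.eventually_gt_atTop 0] with x hx hpos
    rwa [smul_inv_smul₀ hpos.ne']
  exact mem_asymptoticCone_iff.mpr
    ((hq.atTop_smul_nhds_tendsto_asymptoticNhds hd).frequently hrescale.frequently)

end Normed

section InnerProduct

variable {E : Type*} [NormedAddCommGroup E] [InnerProductSpace ℝ E]

theorem ContDiff.continuous_gradient [CompleteSpace E] {f : E → ℝ} (hf : ContDiff ℝ 1 f) :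
    Continuous (gradient f) :=
  (InnerProductSpace.toDual ℝ E).symm.continuous.comp (hf.continuous_fderiv one_ne_zero)

theorem inner_nonpos_of_tendsto_normalize {α : Type*} {l : Filter α} [l.NeBot]
    {v q : α → E} {v₀ d p : E} (hv : Tendsto v l (𝓝 v₀))
    (hq : Tendsto (fun x => ‖q x‖) l atTop) (hd : Tendsto (fun x => ‖q x‖⁻¹ • q x) l (𝓝 d))
    (hle : ∀ᶠ x in l, ⟪v x, q x⟫ ≤ ⟪v x, p⟫) : ⟪v₀, d⟫ ≤ 0 := by
  have hrhs : Tendsto (fun x => ‖q x‖⁻¹ * ⟪v x, p⟫) l (𝓝 0) := by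
    simpa using (tendsto_inv_atTop_zero.comp hq).mul (hv.inner tendsto_const_nhds)
  refine le_of_tendsto_of_tendsto (hv.inner hd) hrhs ?_
  filter_upwards [hle] with x hx
  rw [real_inner_smul_right]
  exact mul_le_mul_of_nonneg_left hx (inv_nonneg.mpr (norm_nonneg _))

end InnerProduct

/-- If `C ⊆ ℝⁿ` is nonempty, closed and convex, `f` is continuously differentiable and
satisfies condition (B) on `C`, and `D ⊆ C` is bounded, then the union over `x ∈ D` of the
sets of minimizers of `p ↦ ⟪∇f x, p - x⟫` over `C` is bounded. -/
theorem minimizers_bounded (n : ℕ) (C : Set (EuclideanSpace ℝ (Fin n)))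
    (hCne : C.Nonempty) (hCcl : IsClosed C) (hCconv : Convex ℝ C)
    (f : EuclideanSpace ℝ (Fin n) → ℝ) (hf : ContDiff ℝ 1 f)
    (hB : ∀ x ∈ C, ∀ d : EuclideanSpace ℝ (Fin n),
      (∀ y ∈ C, ∀ t : ℝ, 0 ≤ t → y + t • d ∈ C) → d ≠ 0 → 0 < ⟪gradient f x, d⟫)
    (D : Set (EuclideanSpace ℝ (Fin n))) (hDC : D ⊆ C) (hD : Bornology.IsBounded D) :
    Bornology.IsBounded
      {q | ∃ x ∈ D, q ∈ C ∧ ∀ p ∈ C, ⟪gradient f x, q - x⟫ ≤ ⟪gradient f x, p - x⟫} := by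
  by_contra hunb
  obtain ⟨q, hq, hq_top⟩ := exists_seq_mem_tendsto_norm_atTop hunb
  choose x hxD hqC hmin using hq
  obtain ⟨⟨x₀, d⟩, ⟨hx₀, hd⟩, φ, hφ, hlim⟩ :=
    (hD.isCompact_closure.prod (isCompact_sphere 0 1)).tendsto_subseq'
      (x := fun k => (x k, ‖q k‖⁻¹ • q k)) <| Eventually.frequently <| by
        filter_upwards [hq_top.eventually_gt_atTop 0] with k hk
        exact ⟨subset_closure (hxD k), by simp [norm_smul, hk.ne']⟩
  have hqφ_top := hq_top.comp hφ.tendsto_atTop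
  have hx_lim : Tendsto (fun k => x (φ k)) atTop (𝓝 x₀) := hlim.fst_nhds
  have hdir : Tendsto (fun k => ‖q (φ k)‖⁻¹ • q (φ k)) atTop (𝓝 d) := hlim.snd_nhds
  have hx₀C : x₀ ∈ C := hCcl.closure_subset_iff.mpr hDC hx₀
  have hd_cone : d ∈ asymptoticCone ℝ C :=
    mem_asymptoticCone_of_tendsto_normalize (.of_forall fun k => hqC (φ k)) hqφ_top hdir
  have hd_ray : ∀ y ∈ C, ∀ t : ℝ, 0 ≤ t → y + t • d ∈ C := fun y hy t ht => by
    simpa [add_comm] using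
      hCconv.smul_vadd_mem_of_isClosed_of_mem_asymptoticCone hCcl ht hd_cone hy
  obtain ⟨p, hp⟩ := hCne
  have hd_nonpos : ⟪gradient f x₀, d⟫ ≤ 0 :=
    inner_nonpos_of_tendsto_normalize
      ((hf.continuous_gradient.tendsto x₀).comp hx_lim) hqφ_top hdir
      (.of_forall fun k => by simpa [inner_sub_right] using hmin (φ k) p hp)
  exact (hB x₀ hx₀C d hd_ray (ne_zero_of_mem_unit_sphere ⟨d, hd⟩)).not_ge hd_nonpos
end

section
/- Let C ⊆ ℝⁿ be a nonempty closed convex set and f : ℝⁿ → ℝ be continuously differentiable with ∇f L-Lipschitz on C for some L > 0. Let x ∈ C, let p ∈ C satisfy ⟨∇f(x), p − x⟩ ≤ ⟨∇f(x), q − x⟩ for all q ∈ C, set v := ⟨∇f(x), p − x⟩ and suppose v < 0. Define λ := min{1, |v|/(L‖p − x‖²)} and x⁺ := x + λ(p − x). Then f(x⁺) ≤ f(x) − (1/2)|v|·λ; in particular f(x⁺) < f(x). -/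
open scoped RealInnerProductSpace

/-!
Along the segment from `x` to `y`, the function
`s ↦ f (x + s (y - x)) - s ⟪∇f x, y - x⟫ - L s² ‖y - x‖² / 2` has nonpositive derivative on
`[0, 1]` by Cauchy–Schwarz and the Lipschitz bound, which gives the descent lemma
`f y ≤ f x + ⟪∇f x, y - x⟫ + L/2 ‖y - x‖²`. Apply it to `y = x⁺`, which lies in `C` by convexity:
the choice of `λ` makes `L λ ‖p - x‖² ≤ |v|`, so the quadratic term costs at most half of the
linear decrease `λ |v|`.
-/

open Set

section

variable {E : Type*} [NormedAddCommGroup E] [InnerProductSpace ℝ E] [CompleteSpace E]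
  {f : E → ℝ} {x : E}

theorem DifferentiableAt.hasDerivAt_comp_add_smul {d : E} {t : ℝ}
    (hf : DifferentiableAt ℝ f (x + t • d)) :
    HasDerivAt (fun s : ℝ => f (x + s • d)) ⟪gradient f (x + t • d), d⟫ t := by
  have hline : HasDerivAt (fun s : ℝ => x + s • d) d t := by
    simpa using ((hasDerivAt_id t).smul_const d).const_add x
  exact hf.hasGradientAt.hasFDerivAt.comp_hasDerivAt t hline

theorem Convex.apply_le_add_inner_gradient_add_mul_sq {C : Set E} (hC : Convex ℝ C)
    (hf : ∀ y ∈ C, DifferentiableAt ℝ f y) {L : ℝ}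
    (hLip : ∀ a ∈ C, ∀ b ∈ C, ‖gradient f a - gradient f b‖ ≤ L * ‖a - b‖)
    {y : E} (hx : x ∈ C) (hy : y ∈ C) :
    f y ≤ f x + ⟪gradient f x, y - x⟫ + L / 2 * ‖y - x‖ ^ 2 := by
  set d := y - x
  have hseg : ∀ t ∈ Icc (0 : ℝ) 1, x + t • d ∈ C := fun _ ht => hC.add_smul_sub_mem hx hy ht
  have hderiv : ∀ t ∈ Icc (0 : ℝ) 1, HasDerivAt
      (fun s : ℝ => f (x + s • d) - s * ⟪gradient f x, d⟫ - L / 2 * s ^ 2 * ‖d‖ ^ 2)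
      (⟪gradient f (x + t • d), d⟫ - ⟪gradient f x, d⟫ - L * t * ‖d‖ ^ 2) t := by
    intro t ht
    refine (((hf _ (hseg t ht)).hasDerivAt_comp_add_smul.sub
      ((hasDerivAt_id t).mul_const ⟪gradient f x, d⟫)).sub
      (((hasDerivAt_pow 2 t).const_mul (L / 2)).mul_const (‖d‖ ^ 2))).congr_deriv ?_
    simp only [Nat.cast_ofNat, pow_one, one_mul, Nat.add_one_sub_one]
    ring
  have hmono : AntitoneOn
      (fun s : ℝ => f (x + s • d) - s * ⟪gradient f x, d⟫ - L / 2 * s ^ 2 * ‖d‖ ^ 2)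
      (Icc 0 1) := by
    refine antitoneOn_of_hasDerivWithinAt_nonpos (convex_Icc 0 1)
      (fun t ht => (hderiv t ht).continuousAt.continuousWithinAt)
      (fun t ht => (hderiv t (interior_subset ht)).hasDerivWithinAt) fun t ht => ?_
    have ht' := interior_subset ht
    have hcs : ⟪gradient f (x + t • d) - gradient f x, d⟫ ≤ L * t * ‖d‖ ^ 2 :=
      calc ⟪gradient f (x + t • d) - gradient f x, d⟫
          ≤ ‖gradient f (x + t • d) - gradient f x‖ * ‖d‖ := real_inner_le_norm _ _
        _ ≤ L * ‖x + t • d - x‖ * ‖d‖ := by gcongr; exact hLip _ (hseg t ht') _ hx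
        _ = L * t * ‖d‖ ^ 2 := by
          rw [add_sub_cancel_left, norm_smul, Real.norm_of_nonneg ht'.1]; ring
    rw [inner_sub_left] at hcs
    linarith
  have := hmono (left_mem_Icc.2 zero_le_one) (right_mem_Icc.2 zero_le_one) zero_le_one
  simp only [zero_smul, add_zero, one_smul, zero_mul, sub_zero, one_mul, ne_eq,
    OfNat.ofNat_ne_zero, not_false_eq_true, zero_pow, mul_zero, one_pow, mul_one] at this
  rw [show x + d = y from add_sub_cancel x y] at this
  linarith

end

theorem mul_min_one_div_le {b c : ℝ} (hb : 0 ≤ b) (hc : 0 ≤ c) : b * min 1 (c / b) ≤ c := by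
  rcases hb.eq_or_lt with rfl | hb
  · simpa using hc
  · calc b * min 1 (c / b) ≤ b * (c / b) := by gcongr; exact min_le_right _ _
      _ = c := mul_div_cancel₀ c hb.ne'

theorem frank_wolfe_sufficient_decrease_general (n : ℕ) (C : Set (EuclideanSpace ℝ (Fin n)))
    (hCconv : Convex ℝ C)
    (f : EuclideanSpace ℝ (Fin n) → ℝ) (hf : ContDiff ℝ 1 f)
    (L : ℝ) (hL : 0 < L)
    (hLip : ∀ a ∈ C, ∀ b ∈ C, ‖gradient f a - gradient f b‖ ≤ L * ‖a - b‖)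
    (x : EuclideanSpace ℝ (Fin n)) (hx : x ∈ C)
    (p : EuclideanSpace ℝ (Fin n)) (hp : p ∈ C)
    (v : ℝ) (hv : v = ⟪gradient f x, p - x⟫) (hvneg : v < 0)
    (lam : ℝ) (hlam : lam = min 1 (|v| / (L * ‖p - x‖ ^ 2)))
    (x' : EuclideanSpace ℝ (Fin n)) (hx' : x' = x + lam • (p - x)) :
    f x' ≤ f x - 1 / 2 * |v| * lam ∧ f x' < f x := by
  subst hx'
  have hpx : p - x ≠ 0 := by
    rintro h
    simp [hv, h] at hvneg
  have hv_pos : 0 < |v| := abs_pos.2 hvneg.ne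
  have hpx_pos : 0 < ‖p - x‖ := norm_pos_iff.2 hpx
  have hlam_pos : 0 < lam := hlam ▸ lt_min one_pos (by positivity)
  have hx'C : x + lam • (p - x) ∈ C :=
    hCconv.add_smul_sub_mem hx hp ⟨hlam_pos.le, hlam ▸ min_le_left _ _⟩
  have hdescent := hCconv.apply_le_add_inner_gradient_add_mul_sq
    (fun y _ => (hf.differentiable one_ne_zero).differentiableAt) hLip hx hx'C
  have hstep : L * ‖p - x‖ ^ 2 * lam ≤ |v| :=
    hlam ▸ mul_min_one_div_le (by positivity) (abs_nonneg v)
  rw [add_sub_cancel_left, real_inner_smul_right, ← hv, norm_smul,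
    Real.norm_of_nonneg hlam_pos.le] at hdescent
  have hquad : L / 2 * (lam * ‖p - x‖) ^ 2 ≤ 1 / 2 * |v| * lam := by
    nlinarith [mul_le_mul_of_nonneg_right hstep hlam_pos.le]
  have hdecrease : f (x + lam • (p - x)) ≤ f x - 1 / 2 * |v| * lam := by
    rw [abs_of_neg hvneg] at hquad ⊢
    linarith
  exact ⟨hdecrease, by linarith [mul_pos hv_pos hlam_pos]⟩

/-- Sufficient decrease of a Frank–Wolfe step: if `∇f` is `L`-Lipschitz on the nonempty
closed convex set `C`, `x ∈ C`, `p ∈ C` minimizes `q ↦ ⟪∇f x, q - x⟫` over `C`,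
`v = ⟪∇f x, p - x⟫ < 0`, `λ = min 1 (|v| / (L‖p - x‖²))` and `x⁺ = x + λ(p - x)`, then
`f x⁺ ≤ f x - |v|λ/2 < f x`. -/
theorem frank_wolfe_sufficient_decrease (n : ℕ) (C : Set (EuclideanSpace ℝ (Fin n)))
    (hCne : C.Nonempty) (hCcl : IsClosed C) (hCconv : Convex ℝ C)
    (f : EuclideanSpace ℝ (Fin n) → ℝ) (hf : ContDiff ℝ 1 f)
    (L : ℝ) (hL : 0 < L)
    (hLip : ∀ a ∈ C, ∀ b ∈ C, ‖gradient f a - gradient f b‖ ≤ L * ‖a - b‖)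
    (x : EuclideanSpace ℝ (Fin n)) (hx : x ∈ C)
    (p : EuclideanSpace ℝ (Fin n)) (hp : p ∈ C)
    (hmin : ∀ q ∈ C, ⟪gradient f x, p - x⟫ ≤ ⟪gradient f x, q - x⟫)
    (v : ℝ) (hv : v = ⟪gradient f x, p - x⟫) (hvneg : v < 0)
    (lam : ℝ) (hlam : lam = min 1 (|v| / (L * ‖p - x‖ ^ 2)))
    (x' : EuclideanSpace ℝ (Fin n)) (hx' : x' = x + lam • (p - x)) :
    f x' ≤ f x - 1 / 2 * |v| * lam ∧ f x' < f x :=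
  frank_wolfe_sufficient_decrease_general n C hCconv f hf L hL hLip x hx p hp v hv hvneg lam hlam x'
    hx'
end

section
/- Let C ⊆ ℝⁿ be a nonempty closed convex set, M > 0, and f : ℝⁿ → ℝ be continuously differentiable and M-strongly convex on C, with ∇f L-Lipschitz on C (L > 0) and satisfying condition (B) on C. Let (x^k), (p^k), (v_k) be Frank–Wolfe sequences for f on C with v_k < 0 for all k. Then (x^k) converges to a point x* ∈ C that is a solution of min_{z∈C} f(z), and moreover ‖x^k − x*‖ ≤ √(2(f(x^k) − f(x*))/M) for all k = 0, 1, …. -/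
/-!
Each Frank–Wolfe step decreases `f` by at least `min (|vₖ|, vₖ² / (L ‖pₖ - xₖ‖²)) / 2`, and by
convexity `|vₖ| ≥ f xₖ - f x*`. If the gap `f xₖ - f x*` stayed above some `l > 0`, the decrease
could only tend to zero if `‖pₖ - xₖ‖ → ∞`. The iterates are bounded by strong convexity, so along
a subsequence `xₖ → x̄` and `(pₖ - xₖ) / ‖pₖ - xₖ‖` tends to a unit vector `d` of the asymptotic
cone of `C` with `⟪∇f x̄, d⟫ ≤ 0`, contradicting condition (B). Hence `f xₖ → f x*`, and the
quadratic growth `M / 2 ‖x - x*‖² ≤ f x - f x*` around the minimizer gives the distance bound and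
`xₖ → x*`.
-/

open scoped RealInnerProductSpace NNReal Topology
open Filter Set

section StrongConvexity

variable {E : Type*} [NormedAddCommGroup E] [NormedSpace ℝ E] {C : Set E} {m : ℝ} {f : E → ℝ}
  {a b : E} {t : ℝ}

lemma StrongConvexOn.apply_add_smul_sub_le (hf : StrongConvexOn C m f) (ha : a ∈ C) (hb : b ∈ C)
    (ht₀ : 0 ≤ t) (ht₁ : t ≤ 1) :
    f (a + t • (b - a)) ≤ f a + t * (f b - f a) - m / 2 * t * (1 - t) * ‖b - a‖ ^ 2 := by
  have h := hf.2 hb ha ht₀ (sub_nonneg.2 ht₁) (add_sub_cancel t 1)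
  rw [show t • b + (1 - t) • a = a + t • (b - a) by module, smul_eq_mul, smul_eq_mul] at h
  linarith

lemma StrongConvexOn.mul_sq_norm_sub_le_of_isMinOn (hf : StrongConvexOn C m f)
    (hmin : IsMinOn f C a) (ha : a ∈ C) (hb : b ∈ C) :
    m / 2 * ‖b - a‖ ^ 2 ≤ f b - f a := by
  have hlim : Tendsto (fun t : ℝ => m / 2 * (1 - t) * ‖b - a‖ ^ 2) (𝓝[>] 0)
      (𝓝 (m / 2 * ‖b - a‖ ^ 2)) := by
    refine tendsto_nhdsWithin_of_tendsto_nhds ?_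
    exact (by fun_prop : Continuous fun t : ℝ => m / 2 * (1 - t) * ‖b - a‖ ^ 2).tendsto' 0 _
      (by simp)
  refine le_of_tendsto hlim ?_
  filter_upwards [Ioc_mem_nhdsGT (zero_lt_one' ℝ)] with t ⟨ht₀, ht₁⟩
  have hseg := hf.apply_add_smul_sub_le ha hb ht₀.le ht₁
  have hmin' := isMinOn_iff.1 hmin _ (hf.1.add_smul_sub_mem ha hb ⟨ht₀.le, ht₁⟩)
  nlinarith

lemma StrongConvexOn.norm_sub_le_sqrt_of_isMinOn (hf : StrongConvexOn C m f) (hm : 0 < m)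
    (hmin : IsMinOn f C a) (ha : a ∈ C) (hb : b ∈ C) :
    ‖b - a‖ ≤ √(2 * (f b - f a) / m) := by
  refine Real.le_sqrt_of_sq_le ((le_div_iff₀ hm).2 ?_)
  linarith [hf.mul_sq_norm_sub_le_of_isMinOn hmin ha hb]

end StrongConvexity

section Gradient

variable {E : Type*} [NormedAddCommGroup E] [InnerProductSpace ℝ E] [CompleteSpace E]
  {C : Set E} {m : ℝ} {f : E → ℝ} {a b d : E} {t : ℝ}

lemma hasDerivAt_apply_add_smul (hf : DifferentiableAt ℝ f (a + t • d)) :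
    HasDerivAt (fun s : ℝ => f (a + s • d)) ⟪gradient f (a + t • d), d⟫ t := by
  have hline : HasDerivAt (fun s : ℝ => a + s • d) d t := by
    simpa using ((hasDerivAt_id t).smul_const d).const_add a
  exact hf.hasGradientAt.hasFDerivAt.comp_hasDerivAt t hline

lemma StrongConvexOn.add_inner_gradient_add_le (hf : StrongConvexOn C m f)
    (hfa : DifferentiableAt ℝ f a) (ha : a ∈ C) (hb : b ∈ C) :
    f a + ⟪gradient f a, b - a⟫ + m / 2 * ‖b - a‖ ^ 2 ≤ f b := by
  have hslope : Tendsto (fun t : ℝ => t⁻¹ * (f (a + t • (b - a)) - f a)) (𝓝[>] 0)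
      (𝓝 ⟪gradient f a, b - a⟫) := by
    have h := hasDerivAt_apply_add_smul (t := 0) (d := b - a) (by simpa using hfa)
    simpa using h.tendsto_slope_zero_right
  have hbound : Tendsto (fun t : ℝ => f b - f a - m / 2 * (1 - t) * ‖b - a‖ ^ 2) (𝓝[>] 0)
      (𝓝 (f b - f a - m / 2 * ‖b - a‖ ^ 2)) := by
    refine tendsto_nhdsWithin_of_tendsto_nhds ?_
    exact (by fun_prop : Continuous fun t : ℝ => f b - f a - m / 2 * (1 - t) * ‖b - a‖ ^ 2).tendsto'
      0 _ (by simp)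
  have := le_of_tendsto_of_tendsto hslope hbound <| by
    filter_upwards [Ioc_mem_nhdsGT (zero_lt_one' ℝ)] with t ⟨ht₀, ht₁⟩
    rw [inv_mul_le_iff₀ ht₀]
    nlinarith [hf.apply_add_smul_sub_le ha hb ht₀.le ht₁]
  linarith

lemma StrongConvexOn.exists_isMinOn [ProperSpace E] (hf : StrongConvexOn C m f) (hm : 0 < m)
    (hC : IsClosed C) (hcont : ContinuousOn f C) (ha : a ∈ C) (hfa : DifferentiableAt ℝ f a) :
    ∃ x ∈ C, IsMinOn f C x := by
  refine hcont.exists_isMinOn' hC ha (eventually_inf_principal.2 ?_)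
  have hfar : ∀ᶠ x in cocompact E, 2 * ‖gradient f a‖ / m ≤ ‖x - a‖ := by
    simpa only [dist_eq_norm] using (tendsto_dist_right_cocompact_atTop a).eventually_ge_atTop _
  filter_upwards [hfar] with x hx hxC
  have hgrad : -(‖gradient f a‖ * ‖x - a‖) ≤ ⟪gradient f a, x - a⟫ :=
    neg_le_of_abs_le (abs_real_inner_le_norm _ _)
  rw [div_le_iff₀ hm] at hx
  nlinarith [hf.add_inner_gradient_add_le hfa ha hxC, norm_nonneg (x - a)]

lemma apply_le_add_inner_gradient_add_of_lipschitzOnWith {K : ℝ≥0} (hC : Convex ℝ C)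
    (hf : ∀ x ∈ C, DifferentiableAt ℝ f x) (hK : LipschitzOnWith K (gradient f) C)
    (ha : a ∈ C) (hb : b ∈ C) :
    f b ≤ f a + ⟪gradient f a, b - a⟫ + K / 2 * ‖b - a‖ ^ 2 := by
  set ψ : ℝ → ℝ := fun t => f (a + t • (b - a)) - t * ⟪gradient f a, b - a⟫
    - K / 2 * t ^ 2 * ‖b - a‖ ^ 2
  have hseg : ∀ t ∈ Icc (0 : ℝ) 1, a + t • (b - a) ∈ C := fun t ht => hC.add_smul_sub_mem ha hb ht
  have hψ : ∀ t ∈ Icc (0 : ℝ) 1, HasDerivAt ψ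
      (⟪gradient f (a + t • (b - a)) - gradient f a, b - a⟫ - K * t * ‖b - a‖ ^ 2) t := by
    intro t ht
    have h := (((hasDerivAt_apply_add_smul (hf _ (hseg t ht))).sub
      ((hasDerivAt_id t).mul_const ⟪gradient f a, b - a⟫)).sub
      (((hasDerivAt_pow 2 t).const_mul (K / 2 : ℝ)).mul_const (‖b - a‖ ^ 2)))
    refine h.congr_deriv ?_
    rw [inner_sub_left]
    push_cast
    ring
  have hanti : AntitoneOn ψ (Icc 0 1) := by
    refine antitoneOn_of_hasDerivWithinAt_nonpos (convex_Icc 0 1)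
      (fun t ht => (hψ t ht).continuousAt.continuousWithinAt)
      (fun t ht => (hψ t (interior_subset ht)).hasDerivWithinAt) fun t ht => ?_
    rw [interior_Icc] at ht
    have hlip : ‖gradient f (a + t • (b - a)) - gradient f a‖ ≤ K * (t * ‖b - a‖) := by
      simpa [← dist_eq_norm, norm_smul, abs_of_pos ht.1] using
        hK.dist_le_mul _ (hseg t (Ioo_subset_Icc_self ht)) _ ha
    calc ⟪gradient f (a + t • (b - a)) - gradient f a, b - a⟫ - K * t * ‖b - a‖ ^ 2
        ≤ ‖gradient f (a + t • (b - a)) - gradient f a‖ * ‖b - a‖ - K * t * ‖b - a‖ ^ 2 := by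
          gcongr; exact real_inner_le_norm _ _
      _ ≤ K * (t * ‖b - a‖) * ‖b - a‖ - K * t * ‖b - a‖ ^ 2 := by gcongr
      _ = 0 := by ring
  have h01 := hanti (left_mem_Icc.2 zero_le_one) (right_mem_Icc.2 zero_le_one) zero_le_one
  simp only [ψ, zero_smul, one_smul, add_zero, add_sub_cancel] at h01
  linarith

end Gradient

lemma mem_asymptoticCone_of_tendsto {E ι : Type*} [NormedAddCommGroup E] [NormedSpace ℝ E]
    {l : Filter ι} [l.NeBot] {s : Set E} {x p : ι → E} {r : ι → ℝ} {a d : E}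
    (hp : ∀ᶠ i in l, p i ∈ s) (hx : Tendsto x l (𝓝 a)) (hr : Tendsto r l atTop)
    (hd : Tendsto (fun i => (r i)⁻¹ • (p i - x i)) l (𝓝 d)) :
    d ∈ asymptoticCone ℝ s := by
  have hq : Tendsto (fun i => (r i)⁻¹ • (p i - x i) + (r i)⁻¹ • x i) l (𝓝 d) := by
    simpa using hd.add (hr.inv_tendsto_atTop.smul hx)
  have hp' : Tendsto p l (AffineSpace.asymptoticNhds ℝ E d) := by
    refine (hr.atTop_smul_nhds_tendsto_asymptoticNhds hq).congr' ?_
    filter_upwards [hr.eventually_ne_atTop 0] with i hi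
    rw [← smul_add, sub_add_cancel, smul_inv_smul₀ hi]
  exact hp'.frequently hp.frequently

/-- The step size `min 1 (w / c)` minimizes the model `-t * w + c / 2 * t ^ 2` over `[0, 1]`. -/
lemma neg_mul_add_half_mul_sq_le_of_min_one_div {w c : ℝ} (hw : 0 < w) (hc : 0 < c) :
    -(min 1 (w / c) * w) + c / 2 * min 1 (w / c) ^ 2 ≤ -(min w (w ^ 2 / c) / 2) := by
  rcases le_total w c with hwc | hcw
  · have h₁ : min 1 (w / c) = w / c := min_eq_right ((div_le_one hc).2 hwc)
    have h₂ : min w (w ^ 2 / c) = w ^ 2 / c :=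
      min_eq_right ((div_le_iff₀ hc).2 (by nlinarith))
    rw [h₁, h₂]
    apply le_of_eq
    field_simp
    ring
  · have h₁ : min 1 (w / c) = 1 := min_eq_left ((one_le_div hc).2 hcw)
    have h₂ : min w (w ^ 2 / c) = w := min_eq_left ((le_div_iff₀ hc).2 (by nlinarith))
    rw [h₁, h₂]
    linarith

lemma tendsto_zero_of_min_le_sub_succ {s w r : ℕ → ℝ} {c : ℝ} (hc : 0 < c)
    (hs : ∀ k, 0 ≤ s k) (hanti : Antitone s) (hsw : ∀ k, s k ≤ w k) (hr : ∀ k, 0 < r k)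
    (hdec : ∀ k, min (w k) (w k ^ 2 / (c * r k ^ 2)) / 2 ≤ s k - s (k + 1))
    (hbdd : ¬ Tendsto r atTop atTop) :
    Tendsto s atTop (𝓝 0) := by
  obtain ⟨l, hl⟩ : ∃ l, Tendsto s atTop (𝓝 l) :=
    ⟨_, tendsto_atTop_ciInf hanti ⟨0, by rintro _ ⟨k, rfl⟩; exact hs k⟩⟩
  rcases (ge_of_tendsto' hl hs).eq_or_lt with rfl | hl₀
  · exact hl
  -- A gap bounded below by `l > 0` forces `r k → ∞`.
  refine absurd (tendsto_atTop.2 fun B => ?_) hbdd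
  have hstep : Tendsto (fun k => s k - s (k + 1)) atTop (𝓝 0) := by
    simpa using hl.sub (hl.comp (tendsto_add_atTop_nat 1))
  set B' := max B 1
  have hε : 0 < min l (l ^ 2 / (c * B' ^ 2)) / 2 := by positivity
  filter_upwards [hstep.eventually_lt_const hε] with k hk
  have hlw : min l (l ^ 2 / (c * r k ^ 2)) ≤ min (w k) (w k ^ 2 / (c * r k ^ 2)) := by
    have := hr k
    gcongr <;> exact (hanti.le_of_tendsto hl k).trans (hsw k)
  have hlt : l ^ 2 / (c * r k ^ 2) < l ^ 2 / (c * B' ^ 2) := by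
    by_contra! h
    have : min l (l ^ 2 / (c * B' ^ 2)) ≤ min l (l ^ 2 / (c * r k ^ 2)) := min_le_min le_rfl h
    linarith [hdec k]
  have hB' : B' < r k := by
    have := hr k
    rw [div_lt_div_iff_of_pos_left (by positivity) (by positivity) (by positivity)] at hlt
    exact lt_of_pow_lt_pow_left₀ 2 (hr k).le (lt_of_mul_lt_mul_left hlt hc.le)
  exact (le_max_left B 1).trans hB'.le

section FrankWolfe

variable {E : Type*} [NormedAddCommGroup E] [InnerProductSpace ℝ E] [CompleteSpace E]
  {C : Set E} {f : E → ℝ} {K : ℝ≥0}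

lemma not_tendsto_norm_sub_atTop_of_inner_gradient_pos [ProperSpace E] (hC : IsClosed C)
    (hgrad : ContinuousOn (gradient f) C)
    (hB : ∀ a ∈ C, ∀ d ∈ asymptoticCone ℝ C, d ≠ 0 → 0 < ⟪gradient f a, d⟫)
    {x p : ℕ → E} (hx : ∀ k, x k ∈ C) (hxb : Bornology.IsBounded (range x)) (hp : ∀ k, p k ∈ C)
    (hv : ∀ k, ⟪gradient f (x k), p k - x k⟫ ≤ 0) :
    ¬ Tendsto (fun k => ‖p k - x k‖) atTop atTop := by
  intro hr
  set u : ℕ → E := fun k => ‖p k - x k‖⁻¹ • (p k - x k)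
  have hu : ∀ k, u k ∈ Metric.closedBall 0 1 := fun k => by
    simpa [u, norm_smul] using inv_mul_le_one_of_le₀ le_rfl (norm_nonneg (p k - x k))
  obtain ⟨⟨a, d⟩, -, φ, hφ, hlim⟩ := tendsto_subseq_of_bounded
    (hxb.prod Metric.isBounded_closedBall) (x := fun k => (x k, u k))
    fun k => mk_mem_prod (mem_range_self k) (hu k)
  have hxφ : Tendsto (x ∘ φ) atTop (𝓝 a) := (continuous_fst.tendsto _).comp hlim
  have huφ : Tendsto (u ∘ φ) atTop (𝓝 d) := (continuous_snd.tendsto _).comp hlim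
  have hrφ := hr.comp hφ.tendsto_atTop
  have ha : a ∈ C := hC.mem_of_tendsto hxφ (Eventually.of_forall fun k => hx _)
  have hd : d ∈ asymptoticCone ℝ C :=
    mem_asymptoticCone_of_tendsto (Eventually.of_forall fun k => hp _) hxφ hrφ huφ
  have hd1 : ‖d‖ = 1 := by
    refine tendsto_nhds_unique (continuous_norm.tendsto d |>.comp huφ) ?_
    refine tendsto_const_nhds.congr' ?_
    filter_upwards [hrφ.eventually_gt_atTop 0] with k (hk : 0 < ‖p (φ k) - x (φ k)‖)
    simp [u, norm_smul, hk.ne']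
  have hinner : Tendsto (fun k => ⟪gradient f (x (φ k)), u (φ k)⟫) atTop
      (𝓝 ⟪gradient f a, d⟫) :=
    ((hgrad a ha).tendsto.comp (tendsto_nhdsWithin_iff.2
      ⟨hxφ, Eventually.of_forall fun k => hx _⟩)).inner huφ
  have hle : ⟪gradient f a, d⟫ ≤ 0 := by
    refine le_of_tendsto hinner (Eventually.of_forall fun k => ?_)
    simp only [u, inner_smul_right]
    exact mul_nonpos_of_nonneg_of_nonpos (inv_nonneg.2 (norm_nonneg _)) (hv _)
  exact hle.not_gt (hB a ha d hd (by rintro rfl; simp at hd1))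

lemma frankWolfe_step_le (hK₀ : 0 < K) (hC : Convex ℝ C)
    (hf : ∀ x ∈ C, DifferentiableAt ℝ f x) (hK : LipschitzOnWith K (gradient f) C)
    {a p : E} {v : ℝ} (ha : a ∈ C) (hp : p ∈ C) (hv : ⟪gradient f a, p - a⟫ = v) (hv₀ : v < 0) :
    f (a + min 1 (|v| / (K * ‖p - a‖ ^ 2)) • (p - a))
      ≤ f a - min |v| (|v| ^ 2 / (K * ‖p - a‖ ^ 2)) / 2 := by
  have hpa : p - a ≠ 0 := by
    rintro h
    rw [h, inner_zero_right] at hv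
    exact hv₀.ne' hv
  have hc : 0 < (K : ℝ) * ‖p - a‖ ^ 2 := by positivity
  have hq := neg_mul_add_half_mul_sq_le_of_min_one_div (abs_pos.2 hv₀.ne) hc
  set t := min 1 (|v| / (K * ‖p - a‖ ^ 2))
  have hstep : t ∈ Icc (0 : ℝ) 1 := ⟨le_min zero_le_one (by positivity), min_le_left _ _⟩
  have h := apply_le_add_inner_gradient_add_of_lipschitzOnWith hC hf hK ha
    (hC.add_smul_sub_mem ha hp hstep)
  rw [add_sub_cancel_left, inner_smul_right, hv, norm_smul, mul_pow, Real.norm_eq_abs, sq_abs]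
    at h
  have htv : t * |v| = -(t * v) := by rw [abs_of_neg hv₀]; ring
  linarith

structure IsFrankWolfeSeq (C : Set E) (f : E → ℝ) (L : ℝ≥0) (x p : ℕ → E) (v : ℕ → ℝ) : Prop where
  start_mem : x 0 ∈ C
  oracle_mem : ∀ k, p k ∈ C
  oracle_le : ∀ k, ∀ q ∈ C, ⟪gradient f (x k), p k - x k⟫ ≤ ⟪gradient f (x k), q - x k⟫
  value_eq : ∀ k, v k = ⟪gradient f (x k), p k - x k⟫
  succ_eq : ∀ k, x (k + 1) = x k + min 1 (|v k| / (L * ‖p k - x k‖ ^ 2)) • (p k - x k)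

namespace IsFrankWolfeSeq

variable {x p : ℕ → E} {v : ℕ → ℝ} {m : ℝ} {xstar : E}

lemma mem (h : IsFrankWolfeSeq C f K x p v) (hC : Convex ℝ C) (k : ℕ) : x k ∈ C := by
  induction k with
  | zero => exact h.start_mem
  | succ k ih =>
    rw [h.succ_eq]
    exact hC.add_smul_sub_mem ih (h.oracle_mem k)
      ⟨le_min zero_le_one (by positivity), min_le_left _ _⟩

lemma tendsto_apply_sub_of_isMinOn [ProperSpace E] (h : IsFrankWolfeSeq C f K x p v)
    (hK₀ : 0 < K) (hC : IsClosed C) (hf : StrongConvexOn C m f) (hm : 0 < m)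
    (hdiff : ∀ y ∈ C, DifferentiableAt ℝ f y) (hK : LipschitzOnWith K (gradient f) C)
    (hB : ∀ a ∈ C, ∀ d ∈ asymptoticCone ℝ C, d ≠ 0 → 0 < ⟪gradient f a, d⟫)
    (hv : ∀ k, v k < 0) (hmin : IsMinOn f C xstar) (hxstar : xstar ∈ C) :
    Tendsto (fun k => f (x k) - f xstar) atTop (𝓝 0) := by
  have hxC := h.mem hf.1
  have hdesc : ∀ k, f (x (k + 1)) ≤ f (x k) - min |v k| (|v k| ^ 2 / (K * ‖p k - x k‖ ^ 2)) / 2 :=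
    fun k => h.succ_eq k ▸ frankWolfe_step_le hK₀ hf.1 hdiff hK (hxC k) (h.oracle_mem k)
      (h.value_eq k).symm (hv k)
  have hanti : Antitone fun k => f (x k) :=
    antitone_nat_of_succ_le fun k => (hdesc k).trans (sub_le_self _ (by positivity))
  have hbdd : Bornology.IsBounded (range x) := by
    refine (Metric.isBounded_closedBall (x := xstar)
      (r := √(2 * (f (x 0) - f xstar) / m))).subset (range_subset_iff.2 fun k => ?_)
    rw [Metric.mem_closedBall, dist_eq_norm]
    refine (hf.norm_sub_le_sqrt_of_isMinOn hm hmin hxstar (hxC k)).trans (Real.sqrt_le_sqrt ?_)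
    gcongr
    exact hanti (Nat.zero_le k)
  have hgap : ∀ k, f (x k) - f xstar ≤ |v k| := fun k => by
    have := hf.add_inner_gradient_add_le (hdiff _ (hxC k)) (hxC k) hxstar
    have : 0 ≤ m / 2 * ‖xstar - x k‖ ^ 2 := by positivity
    linarith [abs_of_neg (hv k), h.value_eq k, h.oracle_le k xstar hxstar]
  have hpx : ∀ k, 0 < ‖p k - x k‖ := fun k => norm_pos_iff.2 fun h0 => by
    have := h.value_eq k
    rw [h0, inner_zero_right] at this
    exact (hv k).ne this
  refine tendsto_zero_of_min_le_sub_succ (NNReal.coe_pos.2 hK₀)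
    (fun k => sub_nonneg.2 (hmin (hxC k))) (fun _ _ hkl => sub_le_sub_right (hanti hkl) _) hgap
    hpx (fun k => by linarith [hdesc k]) ?_
  exact not_tendsto_norm_sub_atTop_of_inner_gradient_pos hC hK.continuousOn hB hxC hbdd
    h.oracle_mem fun k => h.value_eq k ▸ (hv k).le

end IsFrankWolfeSeq

end FrankWolfe

theorem frank_wolfe_strongly_convex_convergence_general (n : ℕ) (C : Set (EuclideanSpace ℝ (Fin n)))
    (hCcl : IsClosed C) (hCconv : Convex ℝ C)
    (M : ℝ) (hM : 0 < M)
    (f : EuclideanSpace ℝ (Fin n) → ℝ) (hf : ContDiff ℝ 1 f)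
    (hsc : ∀ a ∈ C, ∀ b ∈ C, ∀ t : ℝ, 0 ≤ t → t ≤ 1 →
      f (t • a + (1 - t) • b) ≤ t * f a + (1 - t) * f b - M / 2 * t * (1 - t) * ‖a - b‖ ^ 2)
    (L : ℝ) (hL : 0 < L)
    (hLip : ∀ a ∈ C, ∀ b ∈ C, ‖gradient f a - gradient f b‖ ≤ L * ‖a - b‖)
    (hB : ∀ a ∈ C, ∀ d : EuclideanSpace ℝ (Fin n),
      (∀ y ∈ C, ∀ t : ℝ, 0 ≤ t → y + t • d ∈ C) → d ≠ 0 → 0 < ⟪gradient f a, d⟫)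
    (x p : ℕ → EuclideanSpace ℝ (Fin n)) (v : ℕ → ℝ)
    (hx0 : x 0 ∈ C) (hpC : ∀ k, p k ∈ C)
    (hpmin : ∀ k, ∀ q ∈ C, ⟪gradient f (x k), p k - x k⟫ ≤ ⟪gradient f (x k), q - x k⟫)
    (hv : ∀ k, v k = ⟪gradient f (x k), p k - x k⟫)
    (hiter : ∀ k, x (k + 1) =
      x k + (min 1 (|v k| / (L * ‖p k - x k‖ ^ 2))) • (p k - x k))
    (hvneg : ∀ k, v k < 0) :
    ∃ xstar ∈ C, Filter.Tendsto x Filter.atTop (nhds xstar) ∧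
      (∀ z ∈ C, f xstar ≤ f z) ∧
      ∀ k, ‖x k - xstar‖ ≤ Real.sqrt (2 * (f (x k) - f xstar) / M) := by
  lift L to ℝ≥0 using hL.le
  have hFW : IsFrankWolfeSeq C f L x p v := ⟨hx0, hpC, hpmin, hv, hiter⟩
  have hK : LipschitzOnWith L (gradient f) C :=
    .of_dist_le_mul fun a ha b hb => by simpa only [dist_eq_norm] using hLip a ha b hb
  have hstrong : StrongConvexOn C M f := ⟨hCconv, fun a ha b hb s t hs ht hst => by
    obtain rfl : t = 1 - s := by linarith
    have := hsc a ha b hb s hs (by linarith)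
    simp only [smul_eq_mul]
    linarith⟩
  have hB' : ∀ a ∈ C, ∀ d ∈ asymptoticCone ℝ C, d ≠ 0 → 0 < ⟪gradient f a, d⟫ :=
    fun a ha d hd => hB a ha d fun y hy t ht => by
      simpa [add_comm] using hCconv.smul_vadd_mem_of_isClosed_of_mem_asymptoticCone hCcl ht hd hy
  have hdiff : ∀ y ∈ C, DifferentiableAt ℝ f y := fun y _ => hf.differentiable one_ne_zero y
  obtain ⟨xstar, hxstar, hmin⟩ :=
    hstrong.exists_isMinOn hM hCcl hf.continuous.continuousOn hx0 (hdiff _ hx0)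
  have hgap := hFW.tendsto_apply_sub_of_isMinOn (NNReal.coe_pos.1 hL) hCcl hstrong hM hdiff hK
    hB' hvneg hmin hxstar
  have hdist : ∀ k, ‖x k - xstar‖ ≤ √(2 * (f (x k) - f xstar) / M) := fun k =>
    hstrong.norm_sub_le_sqrt_of_isMinOn hM hmin hxstar (hFW.mem hCconv k)
  refine ⟨xstar, hxstar, ?_, fun z hz => hmin hz, hdist⟩
  refine tendsto_iff_norm_sub_tendsto_zero.2 (squeeze_zero (fun _ => norm_nonneg _) hdist ?_)
  simpa using ((hgap.const_mul 2).div_const M).sqrt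

/-- If `f` is `M`-strongly convex on `C`, the Frank–Wolfe sequence `(x k)` converges to a
solution `x*` of the problem of minimizing `f` over `C`, and
`‖x k - x*‖ ≤ √(2 (f (x k) - f x*) / M)` for all `k`. -/
theorem frank_wolfe_strongly_convex_convergence (n : ℕ) (C : Set (EuclideanSpace ℝ (Fin n)))
    (hCne : C.Nonempty) (hCcl : IsClosed C) (hCconv : Convex ℝ C)
    (M : ℝ) (hM : 0 < M)
    (f : EuclideanSpace ℝ (Fin n) → ℝ) (hf : ContDiff ℝ 1 f)
    (hsc : ∀ a ∈ C, ∀ b ∈ C, ∀ t : ℝ, 0 ≤ t → t ≤ 1 →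
      f (t • a + (1 - t) • b) ≤ t * f a + (1 - t) * f b - M / 2 * t * (1 - t) * ‖a - b‖ ^ 2)
    (L : ℝ) (hL : 0 < L)
    (hLip : ∀ a ∈ C, ∀ b ∈ C, ‖gradient f a - gradient f b‖ ≤ L * ‖a - b‖)
    (hB : ∀ a ∈ C, ∀ d : EuclideanSpace ℝ (Fin n),
      (∀ y ∈ C, ∀ t : ℝ, 0 ≤ t → y + t • d ∈ C) → d ≠ 0 → 0 < ⟪gradient f a, d⟫)
    (x p : ℕ → EuclideanSpace ℝ (Fin n)) (v : ℕ → ℝ)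
    (hx0 : x 0 ∈ C) (hpC : ∀ k, p k ∈ C)
    (hpmin : ∀ k, ∀ q ∈ C, ⟪gradient f (x k), p k - x k⟫ ≤ ⟪gradient f (x k), q - x k⟫)
    (hv : ∀ k, v k = ⟪gradient f (x k), p k - x k⟫)
    (hiter : ∀ k, x (k + 1) =
      x k + (min 1 (|v k| / (L * ‖p k - x k‖ ^ 2))) • (p k - x k))
    (hvneg : ∀ k, v k < 0) :
    ∃ xstar ∈ C, Filter.Tendsto x Filter.atTop (nhds xstar) ∧
      (∀ z ∈ C, f xstar ≤ f z) ∧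
      ∀ k, ‖x k - xstar‖ ≤ Real.sqrt (2 * (f (x k) - f xstar) / M) :=
  frank_wolfe_strongly_convex_convergence_general n C hCcl hCconv M hM f hf hsc L hL hLip hB x p v
    hx0 hpC hpmin hv hiter hvneg
end

section
/- Let C ⊆ ℝⁿ be a nonempty closed convex set and f : ℝⁿ → ℝ be continuously differentiable and convex, with ∇f L-Lipschitz on C (L > 0). Let (x^k), (p^k), (v_k) be Frank–Wolfe sequences for f on C with v_k < 0 for all k, and suppose (x^k) converges to a point x* ∈ C with f(x*) ≤ f(z) for all z ∈ C; set f* := f(x*). Suppose σ > 0 satisfies ‖p^k − x^k‖ ≤ σ for all k, γ > 0 satisfies ‖∇f(x^k)‖ ≤ γ for all k, and set Γ := min{1/(2γσ), 1/(2Lσ²)}. Then f(x^k) − f* ≤ 1/(Γ·k) for all k = 1, 2, …. -/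
/-!
By the descent lemma, a Frank–Wolfe step with the short step size decreases `f` by at least
`Γ v_k²`, where `Γ` absorbs the bounds `|v_k| ≤ γσ` and `‖p^k - x^k‖ ≤ σ`. Convexity bounds the
optimality gap `h_k := f(x^k) - f*` by the Frank–Wolfe gap `-v_k`, so `h_{k+1} ≤ h_k - Γ h_k²`,
and every nonnegative sequence obeying this recursion satisfies `h_k ≤ 1 / (Γ k)` for `k ≥ 1`.
-/

open scoped RealInnerProductSpace

open Set AffineMap

theorem min_one_abs_div_mem_Icc {v s : ℝ} (hs : 0 ≤ s) : min 1 (|v| / s) ∈ Icc 0 1 :=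
  ⟨le_min zero_le_one (by positivity), min_le_left _ _⟩

/-- The short step `min 1 (|v| / s)` minimises `t v + s t² / 2` over `t ∈ [0, 1]`. -/
theorem min_one_abs_div_mul_add_sq_le {v s Γ : ℝ} (hv : v < 0) (hs : 0 < s)
    (hΓv : 2 * Γ * |v| ≤ 1) (hΓs : 2 * Γ * s ≤ 1) :
    min 1 (|v| / s) * v + s / 2 * min 1 (|v| / s) ^ 2 ≤ -(Γ * v ^ 2) := by
  rw [abs_of_neg hv] at hΓv ⊢
  rcases le_total (-v) s with hvs | hsv
  · rw [min_eq_right ((div_le_one₀ hs).2 hvs)]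
    have hval : -v / s * v + s / 2 * (-v / s) ^ 2 = -(v ^ 2 / (2 * s)) := by
      field_simp
      ring
    have hΓ : Γ * v ^ 2 ≤ v ^ 2 / (2 * s) := by
      rw [le_div_iff₀ (by positivity)]
      nlinarith [sq_nonneg v]
    linarith
  · rw [min_eq_left ((one_le_div₀ hs).2 hsv)]
    nlinarith

theorem le_one_div_mul_of_le_sub_mul_sq {h : ℕ → ℝ} {c : ℝ} (hc : 0 < c)
    (h_nonneg : ∀ k, 0 ≤ h k) (h_rec : ∀ k, h (k + 1) ≤ h k - c * h k ^ 2) :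
    ∀ k, 1 ≤ k → h k ≤ 1 / (c * k) := by
  intro k hk
  induction k, hk using Nat.le_induction with
  | base =>
    rw [Nat.cast_one, mul_one, le_div_iff₀ hc]
    nlinarith [mul_le_mul_of_nonneg_left (h_rec 0) hc.le, sq_nonneg (c * h 0 - 1)]
  | succ k hk ih =>
    have hk' : (1 : ℝ) ≤ k := by exact_mod_cast hk
    set u := c * h k
    have hu : 0 ≤ u := mul_nonneg hc.le (h_nonneg k)
    have huk : u * k ≤ 1 := by
      rw [le_div_iff₀ (by positivity)] at ih
      linarith
    have hu1 : u ≤ 1 := by nlinarith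
    -- `1 - (k + 1) (u - u²) = (1 - k u) (1 - u) + u²`
    have hstep : (u - u ^ 2) * (k + 1) ≤ 1 := by
      nlinarith [mul_nonneg (sub_nonneg.2 huk) (sub_nonneg.2 hu1), sq_nonneg u]
    have hcu : c * h (k + 1) ≤ u - u ^ 2 := by
      nlinarith [mul_le_mul_of_nonneg_left (h_rec k) hc.le]
    rw [Nat.cast_succ, le_div_iff₀ (by positivity)]
    nlinarith

section Gradient

variable {E : Type*} [NormedAddCommGroup E] [InnerProductSpace ℝ E] [CompleteSpace E]
  {f : E → ℝ} {s : Set E} {a b : E} {L : ℝ}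

theorem ConvexOn.add_inner_gradient_sub_le (hf : ConvexOn ℝ s f) (ha : a ∈ s) (hb : b ∈ s)
    (hfa : DifferentiableAt ℝ f a) : f a + ⟪gradient f a, b - a⟫ ≤ f b := by
  have hline : ConvexOn ℝ (Icc 0 1) (f ∘ lineMap (k := ℝ) a b) :=
    (hf.comp_affineMap (lineMap a b)).subset (hf.1.mapsTo_lineMap ha hb) (convex_Icc 0 1)
  have hderiv : HasDerivAt (f ∘ lineMap (k := ℝ) a b) (fderiv ℝ f a (b - a)) 0 := by
    have hfa' : HasFDerivAt f (fderiv ℝ f a) (lineMap a b (0 : ℝ)) := by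
      simpa using hfa.hasFDerivAt
    exact hfa'.comp_hasDerivAt 0 hasDerivAt_lineMap
  have hslope := hline.le_slope_of_hasDerivAt (left_mem_Icc.2 zero_le_one)
    (right_mem_Icc.2 zero_le_one) zero_lt_one hderiv
  simp only [slope_def_field, Function.comp_apply, lineMap_apply_one, lineMap_apply_zero,
    sub_zero, div_one] at hslope
  rw [inner_gradient_left]
  linarith

theorem Convex.descent_lemma (hs : Convex ℝ s) (hf : ∀ y ∈ s, DifferentiableAt ℝ f y)
    (hLip : ∀ y ∈ s, ∀ z ∈ s, ‖gradient f y - gradient f z‖ ≤ L * ‖y - z‖)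
    (ha : a ∈ s) (hb : b ∈ s) :
    f b ≤ f a + ⟪gradient f a, b - a⟫ + L / 2 * ‖b - a‖ ^ 2 := by
  set c := ⟪gradient f a, b - a⟫
  set φ : ℝ → ℝ := fun t ↦ f (lineMap a b t) - t * c - L / 2 * ‖b - a‖ ^ 2 * t ^ 2
  have hmem : ∀ t ∈ Icc (0 : ℝ) 1, lineMap a b t ∈ s := fun t ht ↦ hs.lineMap_mem ha hb ht
  have hφ' : ∀ t ∈ Icc (0 : ℝ) 1, HasDerivAt φ
      (⟪gradient f (lineMap a b t) - gradient f a, b - a⟫ - L * ‖b - a‖ ^ 2 * t) t := by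
    intro t ht
    have hft := ((hf _ (hmem t ht)).hasFDerivAt.comp_hasDerivAt t hasDerivAt_lineMap).sub
      ((hasDerivAt_id t).mul_const c) |>.sub ((hasDerivAt_pow 2 t).const_mul (L / 2 * ‖b - a‖ ^ 2))
    refine hft.congr_deriv ?_
    rw [inner_sub_left, inner_gradient_left]
    ring
  have hinner_le : ∀ t ∈ Ioo (0 : ℝ) 1,
      ⟪gradient f (lineMap a b t) - gradient f a, b - a⟫ ≤ L * ‖b - a‖ ^ 2 * t := by
    intro t ht
    have hdist : ‖lineMap a b t - a‖ = t * ‖b - a‖ := by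
      rw [← dist_eq_norm, dist_lineMap_left, Real.norm_of_nonneg ht.1.le, dist_comm, dist_eq_norm]
    calc ⟪gradient f (lineMap a b t) - gradient f a, b - a⟫
        ≤ ‖gradient f (lineMap a b t) - gradient f a‖ * ‖b - a‖ := real_inner_le_norm _ _
      _ ≤ L * ‖lineMap a b t - a‖ * ‖b - a‖ := by
          gcongr
          exact hLip _ (hmem t (Ioo_subset_Icc_self ht)) _ ha
      _ = L * ‖b - a‖ ^ 2 * t := by rw [hdist]; ring
  have hanti : AntitoneOn φ (Icc 0 1) := by
    refine antitoneOn_of_hasDerivWithinAt_nonpos (convex_Icc 0 1) (f' := fun t ↦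
      ⟪gradient f (lineMap a b t) - gradient f a, b - a⟫ - L * ‖b - a‖ ^ 2 * t)
      (fun t ht ↦ (hφ' t ht).continuousAt.continuousWithinAt) (fun t ht ↦ ?_) (fun t ht ↦ ?_)
    · rw [interior_Icc] at ht
      exact (hφ' t (Ioo_subset_Icc_self ht)).hasDerivWithinAt
    · rw [interior_Icc] at ht
      exact sub_nonpos.2 (hinner_le t ht)
  have := hanti (left_mem_Icc.2 zero_le_one) (right_mem_Icc.2 zero_le_one) zero_le_one
  simp only [φ, lineMap_apply_one, lineMap_apply_zero] at this
  linarith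

theorem frankWolfe_step_decrease (hs : Convex ℝ s) (hf : ∀ y ∈ s, DifferentiableAt ℝ f y)
    (hL : 0 < L) (hLip : ∀ y ∈ s, ∀ z ∈ s, ‖gradient f y - gradient f z‖ ≤ L * ‖y - z‖)
    {p : E} (ha : a ∈ s) (hp : p ∈ s) {Γ : ℝ} (hv : ⟪gradient f a, p - a⟫ < 0)
    (hΓv : 2 * Γ * |⟪gradient f a, p - a⟫| ≤ 1) (hΓd : 2 * Γ * (L * ‖p - a‖ ^ 2) ≤ 1) :
    f (a + min 1 (|⟪gradient f a, p - a⟫| / (L * ‖p - a‖ ^ 2)) • (p - a)) ≤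
      f a - Γ * ⟪gradient f a, p - a⟫ ^ 2 := by
  set v := ⟪gradient f a, p - a⟫
  set t := min 1 (|v| / (L * ‖p - a‖ ^ 2))
  have hpa : p - a ≠ 0 := fun h ↦ hv.ne (by simp [v, h])
  have hsq : 0 < L * ‖p - a‖ ^ 2 := by positivity
  have ht : t ∈ Icc 0 1 := min_one_abs_div_mem_Icc hsq.le
  have hdesc := hs.descent_lemma hf hLip ha (hs.add_smul_sub_mem ha hp ht)
  rw [add_sub_cancel_left, real_inner_smul_right, norm_smul, Real.norm_of_nonneg ht.1] at hdesc
  have := min_one_abs_div_mul_add_sq_le hv hsq hΓv hΓd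
  linarith

end Gradient

theorem frank_wolfe_complexity_convex_general (n : ℕ) (C : Set (EuclideanSpace ℝ (Fin n)))
    (hCconv : Convex ℝ C)
    (f : EuclideanSpace ℝ (Fin n) → ℝ) (hf : ContDiff ℝ 1 f)
    (hconv : ConvexOn ℝ Set.univ f)
    (L : ℝ) (hL : 0 < L)
    (hLip : ∀ a ∈ C, ∀ b ∈ C, ‖gradient f a - gradient f b‖ ≤ L * ‖a - b‖)
    (x p : ℕ → EuclideanSpace ℝ (Fin n)) (v : ℕ → ℝ)
    (hx0 : x 0 ∈ C) (hpC : ∀ k, p k ∈ C)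
    (hpmin : ∀ k, ∀ q ∈ C, ⟪gradient f (x k), p k - x k⟫ ≤ ⟪gradient f (x k), q - x k⟫)
    (hv : ∀ k, v k = ⟪gradient f (x k), p k - x k⟫)
    (hiter : ∀ k, x (k + 1) =
      x k + (min 1 (|v k| / (L * ‖p k - x k‖ ^ 2))) • (p k - x k))
    (hvneg : ∀ k, v k < 0)
    (xstar : EuclideanSpace ℝ (Fin n)) (hxstar : xstar ∈ C)
    (hopt : ∀ z ∈ C, f xstar ≤ f z)
    (σ : ℝ) (hσ : 0 < σ) (hσb : ∀ k, ‖p k - x k‖ ≤ σ)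
    (γ : ℝ) (hγ : 0 < γ) (hγb : ∀ k, ‖gradient f (x k)‖ ≤ γ)
    (Γ : ℝ) (hΓ : Γ = min (1 / (2 * γ * σ)) (1 / (2 * L * σ ^ 2))) :
    ∀ k : ℕ, 1 ≤ k → f (x k) - f xstar ≤ 1 / (Γ * k) := by
  have hdiff : Differentiable ℝ f := hf.differentiable one_ne_zero
  have hxC : ∀ k, x k ∈ C := by
    intro k
    induction k with
    | zero => exact hx0
    | succ k ih =>
      rw [hiter k]
      exact hCconv.add_smul_sub_mem ih (hpC k) (min_one_abs_div_mem_Icc (by positivity))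
  have hΓγσ : Γ * (2 * γ * σ) ≤ 1 := (le_div_iff₀ (by positivity)).1 (hΓ ▸ min_le_left _ _)
  have hΓLσ : Γ * (2 * L * σ ^ 2) ≤ 1 := (le_div_iff₀ (by positivity)).1 (hΓ ▸ min_le_right _ _)
  have hΓ_pos : 0 < Γ := hΓ ▸ lt_min (by positivity) (by positivity)
  have hdecrease : ∀ k, f (x (k + 1)) ≤ f (x k) - Γ * v k ^ 2 := by
    intro k
    have hvk : |v k| ≤ γ * σ := hv k ▸ (abs_real_inner_le_norm _ _).trans
      (mul_le_mul (hγb k) (hσb k) (norm_nonneg _) hγ.le)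
    have hdk : ‖p k - x k‖ ^ 2 ≤ σ ^ 2 := pow_le_pow_left₀ (norm_nonneg _) (hσb k) 2
    have hΓv : 2 * Γ * |v k| ≤ 1 := by nlinarith [mul_le_mul_of_nonneg_left hvk hΓ_pos.le]
    have hΓd : 2 * Γ * (L * ‖p k - x k‖ ^ 2) ≤ 1 := by
      nlinarith [mul_le_mul_of_nonneg_left hdk (mul_pos hΓ_pos hL).le]
    rw [hiter k]
    rw [hv k] at hΓv ⊢
    exact frankWolfe_step_decrease hCconv (fun y _ ↦ hdiff y) hL hLip (hxC k) (hpC k)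
      (hv k ▸ hvneg k) hΓv hΓd
  have hgap : ∀ k, f (x k) - f xstar ≤ -v k := by
    intro k
    have := hconv.add_inner_gradient_sub_le (mem_univ _) (mem_univ xstar) (hdiff (x k))
    linarith [hv k ▸ hpmin k xstar hxstar]
  refine le_one_div_mul_of_le_sub_mul_sq hΓ_pos (fun k ↦ sub_nonneg.2 (hopt _ (hxC k))) ?_
  intro k
  have hsq : (f (x k) - f xstar) ^ 2 ≤ v k ^ 2 := by
    simpa only [neg_sq] using pow_le_pow_left₀ (sub_nonneg.2 (hopt _ (hxC k))) (hgap k) 2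
  linarith [hdecrease k, mul_le_mul_of_nonneg_left hsq hΓ_pos.le]

/-- Iteration-complexity bound for the Frank–Wolfe sequence under convexity:
`f (x k) - f* ≤ 1/(Γ k)` for all `k ≥ 1`, where `Γ = min (1/(2γσ)) (1/(2Lσ²))`. -/
theorem frank_wolfe_complexity_convex (n : ℕ) (C : Set (EuclideanSpace ℝ (Fin n)))
    (hCne : C.Nonempty) (hCcl : IsClosed C) (hCconv : Convex ℝ C)
    (f : EuclideanSpace ℝ (Fin n) → ℝ) (hf : ContDiff ℝ 1 f)
    (hconv : ConvexOn ℝ Set.univ f)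
    (L : ℝ) (hL : 0 < L)
    (hLip : ∀ a ∈ C, ∀ b ∈ C, ‖gradient f a - gradient f b‖ ≤ L * ‖a - b‖)
    (x p : ℕ → EuclideanSpace ℝ (Fin n)) (v : ℕ → ℝ)
    (hx0 : x 0 ∈ C) (hpC : ∀ k, p k ∈ C)
    (hpmin : ∀ k, ∀ q ∈ C, ⟪gradient f (x k), p k - x k⟫ ≤ ⟪gradient f (x k), q - x k⟫)
    (hv : ∀ k, v k = ⟪gradient f (x k), p k - x k⟫)
    (hiter : ∀ k, x (k + 1) =
      x k + (min 1 (|v k| / (L * ‖p k - x k‖ ^ 2))) • (p k - x k))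
    (hvneg : ∀ k, v k < 0)
    (xstar : EuclideanSpace ℝ (Fin n)) (hxstar : xstar ∈ C)
    (hlim : Filter.Tendsto x Filter.atTop (nhds xstar))
    (hopt : ∀ z ∈ C, f xstar ≤ f z)
    (σ : ℝ) (hσ : 0 < σ) (hσb : ∀ k, ‖p k - x k‖ ≤ σ)
    (γ : ℝ) (hγ : 0 < γ) (hγb : ∀ k, ‖gradient f (x k)‖ ≤ γ)
    (Γ : ℝ) (hΓ : Γ = min (1 / (2 * γ * σ)) (1 / (2 * L * σ ^ 2))) :
    ∀ k : ℕ, 1 ≤ k → f (x k) - f xstar ≤ 1 / (Γ * k) :=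
  frank_wolfe_complexity_convex_general n C hCconv f hf hconv L hL hLip x p v hx0 hpC hpmin hv hiter
    hvneg xstar hxstar hopt σ hσ hσb γ hγ hγb Γ hΓ
end

section
/- Let K ⊆ ℝⁿ be a closed convex cone, G : ℝⁿ → ℝⁿ be differentiable with derivative G', and suppose G(x) + G'(x)*x belongs to the dual cone K* = {y : ⟨y, z⟩ ≥ 0 for all z ∈ K} for every x ∈ K. Let a ∈ ℝⁿ satisfy ⟨a, z⟩ > 0 for every nonzero z ∈ K, and define f(x) := ⟨a, x⟩ + ⟨G(x), x⟩, so ∇f(x) = a + G(x) + G'(x)*x. Then for every closed convex set C ⊆ K, f satisfies condition (B) on C: for every x ∈ C and every nonzero d in the asymptotic cone C_∞ of C, ⟨∇f(x), d⟩ > 0. -/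
open scoped RealInnerProductSpace

open Filter Topology

/-- Recession directions of a closed cone: `d = lim_{t → ∞} t⁻¹ • (x + t • d)`. -/
theorem IsClosed.mem_of_forall_add_smul_mem {E : Type*} [AddCommGroup E] [Module ℝ E]
    [TopologicalSpace E] [ContinuousAdd E] [ContinuousSMul ℝ E]
    {K : Set E} (hKcl : IsClosed K) (hKcone : ∀ c : ℝ, 0 < c → ∀ z ∈ K, c • z ∈ K)
    {x d : E} (hxd : ∀ t : ℝ, 0 ≤ t → x + t • d ∈ K) : d ∈ K := by
  have hmem : ∀ t : ℝ, 0 < t → t⁻¹ • x + d ∈ K := fun t ht => by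
    simpa [smul_add, smul_smul, inv_mul_cancel₀ ht.ne'] using
      hKcone t⁻¹ (inv_pos.2 ht) _ (hxd t ht.le)
  have htend : Tendsto (fun t : ℝ => t⁻¹ • x + d) atTop (𝓝 d) := by
    simpa using ((tendsto_inv_atTop_zero (𝕜 := ℝ)).smul_const x).add_const d
  exact hKcl.mem_of_tendsto htend (eventually_gt_atTop 0 |>.mono hmem)

theorem HasFDerivAt.hasGradientAt_inner_add_inner_self {E : Type*} [NormedAddCommGroup E]
    [InnerProductSpace ℝ E] [CompleteSpace E] {G : E → E} {G' : E →L[ℝ] E} {x : E}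
    (hG : HasFDerivAt G G' x) (a : E) :
    HasGradientAt (fun z => ⟪a, z⟫ + ⟪G z, z⟫)
      (a + (G x + ContinuousLinearMap.adjoint G' x)) x := by
  rw [hasGradientAt_iff_hasFDerivAt]
  refine ((innerSL ℝ a).hasFDerivAt.add (hG.inner ℝ (hasFDerivAt_id x))).congr_fderiv ?_
  ext h
  simp [fderivInnerCLM_apply, real_inner_comm, ContinuousLinearMap.adjoint_inner_left]

theorem condition_B_of_structured_general (n : ℕ)
    (K : Set (EuclideanSpace ℝ (Fin n))) (hKcl : IsClosed K)
    (hKcone : ∀ c : ℝ, 0 < c → ∀ z ∈ K, c • z ∈ K)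
    (G : EuclideanSpace ℝ (Fin n) → EuclideanSpace ℝ (Fin n)) (hG : Differentiable ℝ G)
    (hdual : ∀ x ∈ K, ∀ z ∈ K,
      0 ≤ ⟪G x + ContinuousLinearMap.adjoint (fderiv ℝ G x) x, z⟫)
    (a : EuclideanSpace ℝ (Fin n)) (ha : ∀ z ∈ K, z ≠ 0 → 0 < ⟪a, z⟫)
    (f : EuclideanSpace ℝ (Fin n) → ℝ) (hf : ∀ z, f z = ⟪a, z⟫ + ⟪G z, z⟫)
    (C : Set (EuclideanSpace ℝ (Fin n)))
    (hCK : C ⊆ K) :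
    ∀ x ∈ C, ∀ d : EuclideanSpace ℝ (Fin n),
      (∀ y ∈ C, ∀ t : ℝ, 0 ≤ t → y + t • d ∈ C) → d ≠ 0 → 0 < ⟪gradient f x, d⟫ := by
  intro x hx d hC hd
  have hdK : d ∈ K := hKcl.mem_of_forall_add_smul_mem hKcone fun t ht => hCK (hC x hx t ht)
  have hgrad : gradient f x = a + (G x + ContinuousLinearMap.adjoint (fderiv ℝ G x) x) := by
    rw [funext hf]
    exact ((hG x).hasFDerivAt.hasGradientAt_inner_add_inner_self a).gradient
  rw [hgrad, inner_add_left]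
  linarith [hdual x (hCK hx) d hdK, ha d hdK hd]

/-- If `K` is a closed convex cone, `G` is differentiable with `G x + G'(x)* x ∈ K*` for
all `x ∈ K`, and `⟪a, z⟫ > 0` for every nonzero `z ∈ K`, then
`f(x) = ⟨a, x⟩ + ⟨G x, x⟩` satisfies condition (B) on every closed convex `C ⊆ K`:
`⟪∇f x, d⟫ > 0` for every `x ∈ C` and nonzero `d` in the asymptotic cone of `C`. -/
theorem condition_B_of_structured (n : ℕ)
    (K : Set (EuclideanSpace ℝ (Fin n))) (hKcl : IsClosed K) (hKconv : Convex ℝ K)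
    (hKcone : ∀ c : ℝ, 0 < c → ∀ z ∈ K, c • z ∈ K)
    (G : EuclideanSpace ℝ (Fin n) → EuclideanSpace ℝ (Fin n)) (hG : Differentiable ℝ G)
    (hdual : ∀ x ∈ K, ∀ z ∈ K,
      0 ≤ ⟪G x + ContinuousLinearMap.adjoint (fderiv ℝ G x) x, z⟫)
    (a : EuclideanSpace ℝ (Fin n)) (ha : ∀ z ∈ K, z ≠ 0 → 0 < ⟪a, z⟫)
    (f : EuclideanSpace ℝ (Fin n) → ℝ) (hf : ∀ z, f z = ⟪a, z⟫ + ⟪G z, z⟫)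
    (C : Set (EuclideanSpace ℝ (Fin n))) (hCcl : IsClosed C) (hCconv : Convex ℝ C)
    (hCK : C ⊆ K) :
    ∀ x ∈ C, ∀ d : EuclideanSpace ℝ (Fin n),
      (∀ y ∈ C, ∀ t : ℝ, 0 ≤ t → y + t • d ∈ C) → d ≠ 0 → 0 < ⟪gradient f x, d⟫ :=
  condition_B_of_structured_general n K hKcl hKcone G hG hdual a ha f hf C hCK
end

section
/- Let Q ∈ ℝ^{n×n} be a matrix with all entries nonnegative, a ∈ ℝⁿ with all entries strictly positive, and define f : ℝⁿ → ℝ by f(x) := ⟨a, x⟩ + ⟨x, Qx⟩, so ∇f(x) = a + (Q + Qᵀ)x. Then (i) ∇f is Lipschitz continuous on ℝⁿ, and (ii) for every closed convex set C ⊆ ℝⁿ₊ (the nonnegative orthant), f satisfies condition (B) on C: for every x ∈ C and every nonzero d in the asymptotic cone C_∞, ⟨∇f(x), d⟩ > 0. -/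
/-!
`∇f(x) = a + (Q + Qᵀ) x` is affine, hence Lipschitz with constant `‖Q + Qᵀ‖`. A recession
direction `d` of a set inside the nonnegative orthant is itself nonnegative, since otherwise
`x + t d` leaves the orthant for large `t`; and for `x ≥ 0` each entry of `∇f(x)` is at least the
corresponding entry of `a > 0`. Hence `⟨∇f(x), d⟩ > 0` whenever `d ≠ 0`.
-/

open scoped RealInnerProductSpace

theorem hasGradientAt_inner_add_inner_apply {E : Type*} [NormedAddCommGroup E]
    [InnerProductSpace ℝ E] [CompleteSpace E] (a : E) (T : E →L[ℝ] E) (x : E) :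
    HasGradientAt (fun z => ⟪a, z⟫ + ⟪z, T z⟫) (a + (T + ContinuousLinearMap.adjoint T) x) x := by
  rw [hasGradientAt_iff_hasFDerivAt]
  refine ((innerSL ℝ a).hasFDerivAt.add ((hasFDerivAt_id x).inner ℝ T.hasFDerivAt)).congr_fderiv ?_
  ext h
  simp only [add_apply, id_eq, coe_innerSL_apply, ContinuousLinearMap.comp_apply,
    ContinuousLinearMap.prod_apply, ContinuousLinearMap.id_apply, fderivInnerCLM_apply, map_add,
    InnerProductSpace.toDual_apply_apply, real_inner_comm, ContinuousLinearMap.adjoint_inner_left]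
  ring

theorem Real.nonneg_of_forall_nonneg_add_mul {c δ : ℝ} (h : ∀ t, 0 ≤ t → 0 ≤ c + t * δ) :
    0 ≤ δ := by
  by_contra! hδ
  have := h ((|c| + 1) / -δ) (div_nonneg (by positivity) (by linarith))
  rw [div_mul_eq_mul_div, div_neg, mul_div_assoc, div_self hδ.ne, mul_one] at this
  linarith [le_abs_self c]

theorem EuclideanSpace.inner_pos_of_pos_of_nonneg {ι : Type*} [Fintype ι]
    {g d : EuclideanSpace ℝ ι} (hg : ∀ i, 0 < g i) (hd : ∀ i, 0 ≤ d i) (hd₀ : d ≠ 0) :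
    0 < ⟪g, d⟫ := by
  obtain ⟨i, hi⟩ : ∃ i, d i ≠ 0 := by
    by_contra! h
    exact hd₀ (by ext i; exact h i)
  rw [PiLp.inner_apply]
  exact Finset.sum_pos' (fun j _ => mul_nonneg (hd j) (hg j).le)
    ⟨i, Finset.mem_univ i, mul_pos (lt_of_le_of_ne (hd i) (Ne.symm hi)) (hg i)⟩

namespace Matrix

variable {ι : Type*} [Fintype ι] [DecidableEq ι]

theorem toEuclideanCLM_apply_apply (Q : Matrix ι ι ℝ) (x : EuclideanSpace ℝ ι) (i : ι) :
    toEuclideanCLM (𝕜 := ℝ) Q x i = ∑ j, Q i j * x j := rfl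

theorem adjoint_toEuclideanCLM (Q : Matrix ι ι ℝ) :
    ContinuousLinearMap.adjoint (toEuclideanCLM (𝕜 := ℝ) Q) = toEuclideanCLM (𝕜 := ℝ) Qᵀ := by
  rw [← conjTranspose_eq_transpose_of_trivial, ← star_eq_conjTranspose, map_star]
  rfl

theorem toEuclideanCLM_apply_nonneg {Q : Matrix ι ι ℝ} (hQ : ∀ i j, 0 ≤ Q i j)
    {x : EuclideanSpace ℝ ι} (hx : ∀ i, 0 ≤ x i) (i : ι) :
    0 ≤ toEuclideanCLM (𝕜 := ℝ) Q x i :=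
  Finset.sum_nonneg fun j _ => mul_nonneg (hQ i j) (hx j)

end Matrix

open ContinuousLinearMap in
/-- For `f(x) = ⟨a, x⟩ + ⟨x, Q x⟩` with `Q` entrywise nonnegative and `a` entrywise
positive: (i) `∇f` is Lipschitz continuous on `ℝⁿ`, and (ii) `f` satisfies condition (B)
on every closed convex subset `C` of the nonnegative orthant. -/
theorem quadratic_example_A_and_B (n : ℕ)
    (Q : Matrix (Fin n) (Fin n) ℝ) (hQ : ∀ i j, 0 ≤ Q i j)
    (a : EuclideanSpace ℝ (Fin n)) (ha : ∀ i, 0 < a i)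
    (f : EuclideanSpace ℝ (Fin n) → ℝ)
    (hf : ∀ z : EuclideanSpace ℝ (Fin n),
      f z = (∑ i, a i * z i) + ∑ i, z i * ∑ j, Q i j * z j) :
    (∃ L : ℝ, 0 ≤ L ∧ ∀ x y : EuclideanSpace ℝ (Fin n),
      ‖gradient f x - gradient f y‖ ≤ L * ‖x - y‖) ∧
    (∀ C : Set (EuclideanSpace ℝ (Fin n)), IsClosed C → Convex ℝ C →
      C ⊆ {z : EuclideanSpace ℝ (Fin n) | ∀ i, 0 ≤ z i} →
      ∀ x ∈ C, ∀ d : EuclideanSpace ℝ (Fin n),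
        (∀ y ∈ C, ∀ t : ℝ, 0 ≤ t → y + t • d ∈ C) → d ≠ 0 → 0 < ⟪gradient f x, d⟫) := by
  set T := Matrix.toEuclideanCLM (𝕜 := ℝ) Q
  have hf' : f = fun z => ⟪a, z⟫ + ⟪z, T z⟫ := by
    funext z
    simp [hf, T, PiLp.inner_apply, Matrix.toEuclideanCLM_apply_apply, mul_comm]
  have hgrad (x) : gradient f x = a + (T + adjoint T) x := by
    rw [hf']
    exact (hasGradientAt_inner_add_inner_apply a T x).gradient
  refine ⟨⟨‖T + adjoint T‖, norm_nonneg _, fun x y => ?_⟩, ?_⟩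
  · rw [hgrad, hgrad, add_sub_add_left_eq_sub, ← map_sub]
    exact (T + adjoint T).le_opNorm _
  · intro C _ _ hC x hx d hd hd₀
    have hx₀ : ∀ i, 0 ≤ x i := hC hx
    have hd_nonneg : ∀ i, 0 ≤ d i := fun i =>
      Real.nonneg_of_forall_nonneg_add_mul fun t ht => by simpa using hC (hd x hx t ht) i
    refine EuclideanSpace.inner_pos_of_pos_of_nonneg (fun i => ?_) hd_nonneg hd₀
    rw [hgrad, Matrix.adjoint_toEuclideanCLM]
    simp only [PiLp.add_apply, add_apply]
    have hTx : 0 ≤ T x i := Matrix.toEuclideanCLM_apply_nonneg hQ hx₀ i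
    have hTtx : 0 ≤ Matrix.toEuclideanCLM (𝕜 := ℝ) Q.transpose x i :=
      Matrix.toEuclideanCLM_apply_nonneg (fun i j => hQ j i) hx₀ i
    linarith [ha i]
end

section
/- Let β > 0, a ∈ ℝⁿ with all entries strictly positive, and define f : ℝⁿ → ℝ by f(x) := ⟨a, x⟩ + √(1 + β⟨x, x⟩). Then (i) f is convex on ℝⁿ, (ii) ∇f is Lipschitz continuous on ℝⁿ with constant β, and (iii) for every closed convex set C ⊆ ℝⁿ₊, f satisfies condition (B) on C: for every x ∈ C and every nonzero d in the asymptotic cone C_∞, ⟨∇f(x), d⟩ > 0. -/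
/-!
Both the convexity of `√(1 + β‖z‖²)` and the Lipschitz bound rest on the Cauchy–Schwarz
inequality `1 + β⟪x, y⟫ ≤ √(1 + β‖x‖²) √(1 + β‖y‖²)` (for the vectors `(1, √β x)`, `(1, √β y)`).
The gradient is `a + β x / √(1 + β‖x‖²)`, and `x ↦ x / √(1 + β‖x‖²)` is `1`-Lipschitz.
For (B), a recession direction `d` of a subset of the orthant lies in the orthant, so
`⟪∇f x, d⟫ = ⟪a, d⟫ + (β / √(1 + β‖x‖²)) ⟪x, d⟫` is a positive plus a nonnegative term.
-/

open scoped RealInnerProductSpace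

theorem one_add_mul_mul_le_sqrt_mul_sqrt {β : ℝ} (hβ : 0 ≤ β) (A B : ℝ) :
    1 + β * A * B ≤ √(1 + β * A ^ 2) * √(1 + β * B ^ 2) := by
  rw [← Real.sqrt_mul (by positivity)]
  refine (le_abs_self _).trans (Real.abs_le_sqrt ?_)
  nlinarith [mul_nonneg hβ (sq_nonneg (A - B))]

theorem nonneg_of_forall_nonneg_add_mul {u v : ℝ} (h : ∀ t : ℝ, 0 ≤ t → 0 ≤ u + t * v) :
    0 ≤ v := by
  by_contra! hv
  have := h ((|u| + 1) / -v) (div_nonneg (by positivity) (by linarith))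
  rw [div_mul_eq_mul_div, div_neg, mul_div_cancel_right₀ _ hv.ne] at this
  linarith [le_abs_self u]

/-- The inequality `‖x / p - y / q‖² ≤ ‖x - y‖²` with denominators cleared, where `A = ‖x‖`,
`B = ‖y‖`, `c = ⟪x, y⟫`; the slack is at least `β (A - B)² (A² + B² + β A² B²)`. -/
theorem sq_mul_sq_add_sq_mul_sq_sub_le {β A B c p q : ℝ} (hβ : 0 ≤ β) (hA : 0 ≤ A)
    (hB : 0 ≤ B) (hc : c ≤ A * B) (hp : p ^ 2 = 1 + β * A ^ 2) (hq : q ^ 2 = 1 + β * B ^ 2)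
    (hp0 : 0 ≤ p) (hq0 : 0 ≤ q) (hpq : 1 + β * A * B ≤ p * q) :
    A ^ 2 * q ^ 2 + B ^ 2 * p ^ 2 - 2 * c * (p * q) ≤
      (A ^ 2 + B ^ 2 - 2 * c) * (p ^ 2 * q ^ 2) := by
  have hpq1 : 0 ≤ p * q * (p * q - 1) :=
    mul_nonneg (by positivity) (by nlinarith [mul_nonneg (mul_nonneg hβ hA) hB])
  have h1 := mul_le_mul_of_nonneg_right hc hpq1
  have h2 := mul_le_mul_of_nonneg_left hpq (mul_nonneg hA hB)
  have h3 : 0 ≤ β * (A - B) ^ 2 * (A ^ 2 + B ^ 2 + β * A ^ 2 * B ^ 2) := by positivity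
  linear_combination 2 * h1 + 2 * h2 + h3 - (A ^ 2 * q ^ 2 + β * B ^ 4 - 2 * A * B * q ^ 2) * hp
    - (β * A ^ 4 + B ^ 2 * p ^ 2 - 2 * A * B * (1 + β * A ^ 2)) * hq

section InnerProductSpace

variable {E : Type*} [NormedAddCommGroup E] [InnerProductSpace ℝ E] {β : ℝ}

theorem one_add_mul_inner_self_pos (hβ : 0 ≤ β) (x : E) : 0 < 1 + β * ⟪x, x⟫ := by
  have := real_inner_self_nonneg (x := x)
  positivity

theorem one_add_mul_inner_le_sqrt_mul_sqrt (hβ : 0 ≤ β) (x y : E) :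
    1 + β * ⟪x, y⟫ ≤ √(1 + β * ⟪x, x⟫) * √(1 + β * ⟪y, y⟫) := by
  rw [real_inner_self_eq_norm_sq, real_inner_self_eq_norm_sq]
  calc 1 + β * ⟪x, y⟫ ≤ 1 + β * ‖x‖ * ‖y‖ := by
        rw [mul_assoc]; gcongr; exact real_inner_le_norm x y
    _ ≤ _ := one_add_mul_mul_le_sqrt_mul_sqrt hβ _ _

theorem convexOn_sqrt_one_add_mul_inner_self (hβ : 0 ≤ β) :
    ConvexOn ℝ Set.univ (fun z : E => √(1 + β * ⟪z, z⟫)) := by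
  refine ⟨convex_univ, fun x _ y _ s t hs ht hst => ?_⟩
  have hP : √(1 + β * ⟪x, x⟫) ^ 2 = 1 + β * ⟪x, x⟫ :=
    Real.sq_sqrt (one_add_mul_inner_self_pos hβ x).le
  have hQ : √(1 + β * ⟪y, y⟫) ^ 2 = 1 + β * ⟪y, y⟫ :=
    Real.sq_sqrt (one_add_mul_inner_self_pos hβ y).le
  have hPQ := mul_le_mul_of_nonneg_left (one_add_mul_inner_le_sqrt_mul_sqrt hβ x y)
    (mul_nonneg hs ht)
  simp only [smul_eq_mul]
  rw [Real.sqrt_le_left (by positivity)]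
  simp only [inner_add_left, inner_add_right, real_inner_smul_left, real_inner_smul_right,
    real_inner_comm x y]
  have h1 : (s + t) ^ 2 = 1 := by rw [hst, one_pow]
  linear_combination 2 * hPQ - s ^ 2 * hP - t ^ 2 * hQ - h1

theorem hasGradientAt_inner_add_sqrt_one_add_mul_inner_self [CompleteSpace E] (hβ : 0 ≤ β)
    (a x : E) :
    HasGradientAt (fun z => ⟪a, z⟫ + √(1 + β * ⟪z, z⟫)) (a + (β / √(1 + β * ⟪x, x⟫)) • x) x := by
  have hx : 1 + β * ⟪x, x⟫ ≠ 0 := (one_add_mul_inner_self_pos hβ x).ne'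
  have hlin : HasFDerivAt (fun z : E => ⟪a, z⟫) (innerSL ℝ a) x := (innerSL ℝ a).hasFDerivAt
  have hsq := ((((hasFDerivAt_id x).inner ℝ (hasFDerivAt_id x)).const_mul β).const_add 1).sqrt hx
  rw [hasGradientAt_iff_hasFDerivAt]
  refine (hlin.add hsq).congr_fderiv (ContinuousLinearMap.ext fun w => ?_)
  simp only [add_apply, smul_apply, ContinuousLinearMap.comp_apply, ContinuousLinearMap.prod_apply,
    ContinuousLinearMap.id_apply, fderivInnerCLM_apply, coe_innerSL_apply, smul_eq_mul, id_eq,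
    InnerProductSpace.toDual_apply_apply, inner_add_left, real_inner_smul_left, real_inner_comm x w]
  field_simp
  ring

theorem norm_inv_sqrt_smul_sub_le (hβ : 0 ≤ β) (x y : E) :
    ‖(√(1 + β * ⟪x, x⟫))⁻¹ • x - (√(1 + β * ⟪y, y⟫))⁻¹ • y‖ ≤ ‖x - y‖ := by
  have hpq := one_add_mul_mul_le_sqrt_mul_sqrt hβ ‖x‖ ‖y‖
  rw [real_inner_self_eq_norm_sq, real_inner_self_eq_norm_sq]
  set p := √(1 + β * ‖x‖ ^ 2)
  set q := √(1 + β * ‖y‖ ^ 2)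
  have hp : 0 < p := Real.sqrt_pos.2 (by positivity)
  have hq : 0 < q := Real.sqrt_pos.2 (by positivity)
  have key := sq_mul_sq_add_sq_mul_sq_sub_le hβ (norm_nonneg x) (norm_nonneg y)
    (real_inner_le_norm x y) (Real.sq_sqrt (by positivity)) (Real.sq_sqrt (by positivity))
    hp.le hq.le hpq
  rw [← sq_le_sq₀ (norm_nonneg _) (norm_nonneg _), norm_sub_sq_real, norm_sub_sq_real,
    norm_smul, norm_smul, real_inner_smul_left, real_inner_smul_right,
    Real.norm_of_nonneg (inv_nonneg.2 hp.le), Real.norm_of_nonneg (inv_nonneg.2 hq.le)]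
  calc (p⁻¹ * ‖x‖) ^ 2 - 2 * (p⁻¹ * (q⁻¹ * ⟪x, y⟫)) + (q⁻¹ * ‖y‖) ^ 2
      = (‖x‖ ^ 2 * q ^ 2 + ‖y‖ ^ 2 * p ^ 2 - 2 * ⟪x, y⟫ * (p * q)) / (p ^ 2 * q ^ 2) := by
        field_simp
        ring
    _ ≤ ‖x‖ ^ 2 - 2 * ⟪x, y⟫ + ‖y‖ ^ 2 := by
        rw [div_le_iff₀ (by positivity)]
        linarith

theorem norm_add_div_sqrt_smul_sub_le (hβ : 0 ≤ β) (a x y : E) :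
    ‖(a + (β / √(1 + β * ⟪x, x⟫)) • x) - (a + (β / √(1 + β * ⟪y, y⟫)) • y)‖ ≤ β * ‖x - y‖ := by
  have hsub : (a + (β / √(1 + β * ⟪x, x⟫)) • x) - (a + (β / √(1 + β * ⟪y, y⟫)) • y) =
      β • ((√(1 + β * ⟪x, x⟫))⁻¹ • x - (√(1 + β * ⟪y, y⟫))⁻¹ • y) := by
    simp only [add_sub_add_left_eq_sub, smul_sub, smul_smul, div_eq_mul_inv]
  rw [hsub, norm_smul, Real.norm_of_nonneg hβ]
  exact mul_le_mul_of_nonneg_left (norm_inv_sqrt_smul_sub_le hβ x y) hβ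

end InnerProductSpace

theorem nonneg_of_forall_add_smul_mem {ι : Type*} {C : Set (EuclideanSpace ℝ ι)}
    (hC : C ⊆ {z | ∀ i, 0 ≤ z i}) {x d : EuclideanSpace ℝ ι}
    (hd : ∀ t : ℝ, 0 ≤ t → x + t • d ∈ C) (i : ι) : 0 ≤ d i :=
  nonneg_of_forall_nonneg_add_mul fun t ht => by simpa using hC (hd t ht) i

section Orthant

variable {ι : Type*} [Fintype ι]

theorem inner_nonneg_of_nonneg {x y : EuclideanSpace ℝ ι} (hx : ∀ i, 0 ≤ x i)
    (hy : ∀ i, 0 ≤ y i) : 0 ≤ ⟪x, y⟫ := by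
  rw [PiLp.inner_apply]
  exact Finset.sum_nonneg fun i _ => mul_nonneg (hy i) (hx i)

theorem inner_pos_of_pos_of_nonneg {x y : EuclideanSpace ℝ ι} (hx : ∀ i, 0 < x i)
    (hy : ∀ i, 0 ≤ y i) (hy0 : y ≠ 0) : 0 < ⟪x, y⟫ := by
  obtain ⟨j, hj⟩ : ∃ j, y j ≠ 0 := by
    by_contra! h
    exact hy0 (PiLp.ext h)
  rw [PiLp.inner_apply]
  exact Finset.sum_pos' (fun i _ => mul_nonneg (hy i) (hx i).le)
    ⟨j, Finset.mem_univ j, mul_pos ((hy j).lt_of_ne' hj) (hx j)⟩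

end Orthant

/-- For `f(x) = ⟨a, x⟩ + √(1 + β⟨x, x⟩)` with `β > 0` and `a` entrywise positive:
(i) `f` is convex on `ℝⁿ`, (ii) `∇f` is Lipschitz with constant `β`, and (iii) `f`
satisfies condition (B) on every closed convex subset of the nonnegative orthant. -/
theorem sqrt_example_convex_A_and_B (n : ℕ) (β : ℝ) (hβ : 0 < β)
    (a : EuclideanSpace ℝ (Fin n)) (ha : ∀ i, 0 < a i)
    (f : EuclideanSpace ℝ (Fin n) → ℝ)
    (hf : ∀ z : EuclideanSpace ℝ (Fin n),
      f z = ⟪a, z⟫ + Real.sqrt (1 + β * ⟪z, z⟫)) :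
    ConvexOn ℝ Set.univ f ∧
    (∀ x y : EuclideanSpace ℝ (Fin n),
      ‖gradient f x - gradient f y‖ ≤ β * ‖x - y‖) ∧
    (∀ C : Set (EuclideanSpace ℝ (Fin n)), IsClosed C → Convex ℝ C →
      C ⊆ {z : EuclideanSpace ℝ (Fin n) | ∀ i, 0 ≤ z i} →
      ∀ x ∈ C, ∀ d : EuclideanSpace ℝ (Fin n),
        (∀ y ∈ C, ∀ t : ℝ, 0 ≤ t → y + t • d ∈ C) → d ≠ 0 → 0 < ⟪gradient f x, d⟫) := by
  obtain rfl : f = fun z => ⟪a, z⟫ + √(1 + β * ⟪z, z⟫) := funext hf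
  have hgrad (x : EuclideanSpace ℝ (Fin n)) :=
    (hasGradientAt_inner_add_sqrt_one_add_mul_inner_self hβ.le a x).gradient
  refine ⟨((innerₗ _ a).convexOn convex_univ).add (convexOn_sqrt_one_add_mul_inner_self hβ.le),
    fun x y => ?_, fun C _ _ hC x hx d hd hd0 => ?_⟩
  · rw [hgrad, hgrad]
    exact norm_add_div_sqrt_smul_sub_le hβ.le a x y
  · have hd_nonneg := nonneg_of_forall_add_smul_mem hC (hd x hx)
    rw [hgrad, inner_add_left, real_inner_smul_left]
    exact add_pos_of_pos_of_nonneg (inner_pos_of_pos_of_nonneg ha hd_nonneg hd0)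
      (mul_nonneg (by positivity) (inner_nonneg_of_nonneg (hC hx) hd_nonneg))
end
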